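/- arXiv:1711.09426 — 7 statements merged into one kernel-verified Lean document; each statement's English description precedes it below -/
import Mathlib

section
/- Fix ε > 0 and an integer d ≥ 1. There exists p₀ > 0 (depending only on d and ε) and a constant c > 0 (depending only on d and ε) such that for all integers n ≥ k ≥ 2d with k/n ≤ p₀ and every d-uniform hypergraph H on [n], there exists a subhypergraph H′ ⊆ H (obtained by removing hyperedges) such that: (1) Pr_{S∼ν_{n,k}}[H′|_S ≠ ∅] ≥ c · Pr_{S∼ν_{n,k}}[H|_S ≠ ∅]; and (2) for every hyperedge e ∈ H′, Pr_{S∼ν_{n,k}}[H′|_S = {e} | S ⊇ e] ≥ 1 − ε. -/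
/-!
Choose greedily a maximal `G ⊆ H` in which every `g` with `|g| < d` lies in at most
`δ (n / 2k) ^ (d - |g|)` edges, where `δ = ε / 2 ^ (d + 1)`. These codegree caps make `G` spread:
the `k`-sets containing an edge of `G` rarely contain a second one, so by Bonferroni `G` hits
about `|G| C(n-d, k-d)` of them. Maximality makes `G` large: every edge outside `G` contains a
saturated `g`, and the `k`-sets through saturated sets are paid for by the many edges of `G`
through them. Finally `H'` maximises `#{S : H'|_S ≠ ∅} - (1 - ε) Σ_{e ∈ H'} #{S : e ⊆ S}` over
the subsets of `H`: comparing with `G` gives (1), and deleting a single edge of `H'` gives (2).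
-/

open Finset

/-- The family of `k`-element subsets of `[n]` (modeled as `Fin n`);
`ν_{n,k}` is the uniform distribution on this family. -/
def ksets (n k : ℕ) : Finset (Finset (Fin n)) := Finset.univ.powersetCard k

section Codegree

variable {α : Type*} [DecidableEq α]

def codegree (G : Finset (Finset α)) (g : Finset α) : ℕ := #(G.filter (g ⊆ ·))

lemma sum_codegree_le {G : Finset (Finset α)} {d : ℕ} (hG : ∀ f ∈ G, #f = d)
    (P : Finset (Finset α)) : ∑ g ∈ P, codegree G g ≤ 2 ^ d * #G :=
  calc ∑ g ∈ P, codegree G g = ∑ f ∈ G, #(P.filter (· ⊆ f)) := by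
        unfold codegree
        exact sum_card_bipartiteAbove_eq_sum_card_bipartiteBelow _
    _ ≤ ∑ _f ∈ G, 2 ^ d := sum_le_sum fun f hf => by
        rw [← hG f hf, ← card_powerset]
        exact card_le_card fun g hg => mem_powerset.2 (mem_filter.1 hg).2
    _ = 2 ^ d * #G := by rw [sum_const, smul_eq_mul, mul_comm]

lemma sum_erase_le_sum_codegree_mul {G : Finset (Finset α)} {d : ℕ} (hG : ∀ f ∈ G, #f = d)
    {e : Finset α} (he : e ∈ G) (w : Finset α → ℝ) (hw : ∀ g, 0 ≤ w g) :
    ∑ f ∈ G.erase e, w (e ∩ f) ≤ ∑ g ∈ e.powerset.erase e, codegree G g * w g := by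
  have hmaps : ∀ f ∈ G.erase e, e ∩ f ∈ e.powerset.erase e := fun f hf => by
    obtain ⟨hfe, hfG⟩ := mem_erase.1 hf
    refine mem_erase.2 ⟨fun h => hfe ?_, mem_powerset.2 inter_subset_left⟩
    have hef : e ⊆ f := h ▸ inter_subset_right
    exact (eq_of_subset_of_card_le hef (by rw [hG f hfG, hG e he])).symm
  rw [← sum_fiberwise_of_maps_to hmaps]
  refine sum_le_sum fun g _ => ?_
  rw [sum_congr rfl fun f hf => congrArg w (mem_filter.1 hf).2, sum_const, nsmul_eq_mul]
  gcongr
  · exact hw g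
  · exact card_le_card fun f hf => by
      obtain ⟨hf, hfg⟩ := mem_filter.1 hf
      exact mem_filter.2 ⟨(mem_erase.1 hf).2, hfg ▸ inter_subset_right⟩

lemma exists_codegree_le_and_saturated (H : Finset (Finset α)) (d : ℕ) (cap : ℕ → ℕ) :
    ∃ G ⊆ H, (∀ g, #g < d → codegree G g ≤ cap #g) ∧
      ∀ e ∈ H, e ∉ G → ∃ g ⊆ e, #g < d ∧ cap #g ≤ codegree G g := by
  classical
  let admissible := H.powerset.filter fun G => ∀ g, #g < d → codegree G g ≤ cap #g
  obtain ⟨G, hG, hmax⟩ := admissible.exists_max_image card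
    ⟨∅, mem_filter.2 ⟨empty_mem_powerset H, fun g _ => by simp [codegree]⟩⟩
  obtain ⟨hGH, hGcap⟩ : G ⊆ H ∧ ∀ g, #g < d → codegree G g ≤ cap #g := by
    simpa [admissible] using hG
  refine ⟨G, hGH, hGcap, fun e he heG => ?_⟩
  by_contra! hunsat
  have hins : insert e G ∈ admissible := by
    refine mem_filter.2 ⟨mem_powerset.2 (insert_subset he hGH), fun g hg => ?_⟩
    unfold codegree
    rw [filter_insert]
    split_ifs with hge
    · exact (card_insert_le _ _).trans (hunsat g hge hg)
    · exact hGcap g hg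
  have := hmax _ hins
  rw [card_insert_of_notMem heG] at this
  omega

lemma exists_codegree_mul_pow_le_and_saturated (H : Finset (Finset α)) (d : ℕ) {r δ : ℝ}
    (hr0 : 0 < r) (hr1 : r ≤ 1) (hrδ : r ≤ δ) :
    ∃ G ⊆ H, (∀ g, #g < d → codegree G g * r ^ (d - #g) ≤ δ) ∧
      ∀ e ∈ H, e ∉ G → ∃ g ⊆ e, #g < d ∧ δ ≤ 2 * codegree G g * r ^ (d - #g) := by
  obtain ⟨G, hGH, hcap, hsat⟩ :=
    exists_codegree_le_and_saturated H d fun s => ⌊δ / r ^ (d - s)⌋₊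
  refine ⟨G, hGH, fun g hg => ?_, fun e he heG => ?_⟩
  · rw [← le_div_iff₀ (pow_pos hr0 _)]
    exact (Nat.cast_le.2 (hcap g hg)).trans
      (Nat.floor_le (div_nonneg (hr0.le.trans hrδ) (pow_pos hr0 _).le))
  · obtain ⟨g, hge, hg, hsatg⟩ := hsat e he heG
    refine ⟨g, hge, hg, ?_⟩
    have hone : 1 ≤ δ / r ^ (d - #g) := by
      rw [one_le_div (pow_pos hr0 _)]
      exact (pow_le_of_le_one hr0.le hr1 (by omega)).trans hrδ
    have := (Nat.div_two_lt_floor hone).trans_le (Nat.cast_le.2 hsatg)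
    rw [div_lt_iff₀ two_pos, div_lt_iff₀ (pow_pos hr0 _)] at this
    linarith

end Codegree

section UnionBounds

variable {ι β : Type*} [DecidableEq ι] [DecidableEq β]

lemma sum_card_le_card_biUnion_add_sum_card_inter (s : Finset ι) (T : ι → Finset β) :
    ∑ i ∈ s, #(T i) ≤ #(s.biUnion T) + ∑ i ∈ s, ∑ j ∈ s.erase i, #(T i ∩ T j) := by
  induction s using Finset.induction_on with
  | empty => simp
  | insert a s ha ih =>
    have hinter : #(T a ∩ s.biUnion T) ≤ ∑ j ∈ s, #(T a ∩ T j) := by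
      rw [inter_biUnion]; exact card_biUnion_le
    have hpairs : ∑ i ∈ s, ∑ j ∈ s.erase i, #(T i ∩ T j) ≤
        ∑ i ∈ s, ∑ j ∈ (insert a s).erase i, #(T i ∩ T j) :=
      sum_le_sum fun i _ => sum_le_sum_of_subset (erase_subset_erase i (subset_insert a s))
    have := card_union_add_card_inter (T a) (s.biUnion T)
    rw [sum_insert ha, sum_insert ha, biUnion_insert, erase_insert ha]
    omega

lemma exists_subset_potential_le_card_biUnion (s : Finset ι) (T : ι → Finset β) {c : ℝ}
    (hc : 0 ≤ c) : ∃ s' ⊆ s,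
      (∀ t ⊆ s, (#(t.biUnion T) : ℝ) - c * ∑ i ∈ t, (#(T i) : ℝ) ≤
        #(s'.biUnion T)) ∧
      ∀ i ∈ s', c * #(T i) ≤ #(T i \ (s'.erase i).biUnion T) := by
  obtain ⟨s', hs', hmax⟩ := s.powerset.exists_max_image
    (fun t => (#(t.biUnion T) : ℝ) - c * ∑ i ∈ t, (#(T i) : ℝ)) ⟨s, mem_powerset_self s⟩
  rw [mem_powerset] at hs'
  refine ⟨s', hs', fun t ht => (hmax t (mem_powerset.2 ht)).trans ?_, fun i hi => ?_⟩
  · have : 0 ≤ c * ∑ i ∈ s', (#(T i) : ℝ) :=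
      mul_nonneg hc (sum_nonneg fun _ _ => Nat.cast_nonneg _)
    linarith
  -- Removing `i` from the maximiser `s'` loses exactly the points covered by `T i` alone.
  · have h := hmax (s'.erase i) (mem_powerset.2 ((erase_subset i s').trans hs'))
    have hsplit :
        #(s'.biUnion T) = #(T i \ (s'.erase i).biUnion T) + #((s'.erase i).biUnion T) := by
      rw [card_sdiff_add_card, ← biUnion_insert, insert_erase hi]
    have hsum := add_sum_erase s' (fun i => (#(T i) : ℝ)) hi
    rw [hsplit, ← hsum, Nat.cast_add] at h
    linarith

end UnionBounds

section GeometricDecay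

variable {u : ℕ → ℝ} {r : ℝ} {a b : ℕ}

lemma le_pow_mul_of_succ_le (hr : 0 ≤ r) (hab : a ≤ b)
    (h : ∀ j, a ≤ j → j < b → u (j + 1) ≤ r * u j) : u b ≤ r ^ (b - a) * u a := by
  induction b, hab using Nat.le_induction with
  | base => simp
  | succ b hab ih =>
    calc u (b + 1) ≤ r * u b := h b hab (lt_add_one b)
      _ ≤ r * (r ^ (b - a) * u a) :=
          mul_le_mul_of_nonneg_left (ih fun j hj hjb => h j hj (hjb.trans (lt_add_one b))) hr
      _ = r ^ (b + 1 - a) * u a := by rw [Nat.sub_add_comm hab, pow_succ]; ring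

lemma le_pow_mul_of_le_succ (hr : 0 ≤ r) (hab : a ≤ b)
    (h : ∀ j, a ≤ j → j < b → u j ≤ r * u (j + 1)) : u a ≤ r ^ (b - a) * u b := by
  induction b, hab using Nat.le_induction with
  | base => simp
  | succ b hab ih =>
    calc u a ≤ r ^ (b - a) * u b := ih fun j hj hjb => h j hj (hjb.trans (lt_add_one b))
      _ ≤ r ^ (b - a) * (r * u (b + 1)) :=
          mul_le_mul_of_nonneg_left (h b hab (lt_add_one b)) (pow_nonneg hr _)
      _ = r ^ (b + 1 - a) * u (b + 1) := by rw [Nat.sub_add_comm hab, pow_succ]; ring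

end GeometricDecay

section ChooseSub

variable {n k j : ℕ}

lemma mul_choose_sub_succ_le (hjk : j < k) (hkn : k ≤ n) (hjn : 2 * j ≤ n) :
    n * (n - (j + 1)).choose (k - (j + 1)) ≤ 2 * k * (n - j).choose (k - j) := by
  obtain ⟨N, hN⟩ : ∃ N, n - (j + 1) = N := ⟨_, rfl⟩
  obtain ⟨K, hK⟩ : ∃ K, k - (j + 1) = K := ⟨_, rfl⟩
  have hN' : n - j = N + 1 := by omega
  have hK' : k - j = K + 1 := by omega
  rw [hN, hK, hN', hK']
  have key := Nat.add_one_mul_choose_eq N K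
  calc n * N.choose K ≤ 2 * ((N + 1) * N.choose K) := by
        rw [← mul_assoc]; exact Nat.mul_le_mul_right _ (by omega)
    _ = 2 * (K + 1) * (N + 1).choose (K + 1) := by rw [key]; ring
    _ ≤ 2 * k * (N + 1).choose (K + 1) := Nat.mul_le_mul_right _ (by omega)

lemma mul_choose_sub_le (hjk : j < k) (hkn : k ≤ n) (hjk2 : 2 * j ≤ k) :
    k * (n - j).choose (k - j) ≤ 2 * n * (n - (j + 1)).choose (k - (j + 1)) := by
  obtain ⟨N, hN⟩ : ∃ N, n - (j + 1) = N := ⟨_, rfl⟩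
  obtain ⟨K, hK⟩ : ∃ K, k - (j + 1) = K := ⟨_, rfl⟩
  have hN' : n - j = N + 1 := by omega
  have hK' : k - j = K + 1 := by omega
  rw [hN, hK, hN', hK']
  have key := Nat.add_one_mul_choose_eq N K
  calc k * (N + 1).choose (K + 1) ≤ 2 * (K + 1) * (N + 1).choose (K + 1) :=
        Nat.mul_le_mul_right _ (by omega)
    _ = 2 * ((N + 1) * N.choose K) := by rw [key]; ring
    _ ≤ 2 * n * N.choose K := by rw [← mul_assoc]; exact Nat.mul_le_mul_right _ (by omega)

lemma choose_sub_le_pow_mul_choose_sub_left {a b : ℕ} (hab : a ≤ b) (hbk : b ≤ k)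
    (hkn : k ≤ n) (hbn : 2 * b ≤ n) :
    ((n - b).choose (k - b) : ℝ) ≤ (2 * k / n) ^ (b - a) * (n - a).choose (k - a) := by
  refine le_pow_mul_of_succ_le (u := fun j => ((n - j).choose (k - j) : ℝ)) (by positivity) hab
    fun j _ hjb => ?_
  have hn : (0 : ℝ) < n := by exact_mod_cast (show 0 < n by omega)
  rw [div_mul_eq_mul_div, le_div_iff₀ hn, mul_comm]
  exact_mod_cast mul_choose_sub_succ_le (by omega) hkn (by omega)

lemma choose_sub_le_pow_mul_choose_sub_right {a b : ℕ} (hab : a ≤ b) (hkn : k ≤ n)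
    (hbk : 2 * b ≤ k) :
    ((n - a).choose (k - a) : ℝ) ≤ (2 * n / k) ^ (b - a) * (n - b).choose (k - b) := by
  refine le_pow_mul_of_le_succ (u := fun j => ((n - j).choose (k - j) : ℝ)) (by positivity) hab
    fun j _ hjb => ?_
  have hk : (0 : ℝ) < k := by exact_mod_cast (show 0 < k by omega)
  rw [div_mul_eq_mul_div, le_div_iff₀ hk, mul_comm]
  exact_mod_cast mul_choose_sub_le (by omega) hkn (by omega)

end ChooseSub

section KSets

variable {n k : ℕ}

def ksetsContaining (n k : ℕ) (T : Finset (Fin n)) : Finset (Finset (Fin n)) :=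
  (ksets n k).filter (T ⊆ ·)

lemma card_ksetsContaining {T : Finset (Fin n)} (hT : #T ≤ k) :
    #(ksetsContaining n k T) = (n - #T).choose (k - #T) := by
  unfold ksetsContaining ksets
  simpa using card_filter_powersetCard_subset T (univ : Finset (Fin n)) k (subset_univ T) hT

lemma ksetsContaining_inter (e f : Finset (Fin n)) :
    ksetsContaining n k e ∩ ksetsContaining n k f = ksetsContaining n k (e ∪ f) := by
  ext S
  simp only [ksetsContaining, mem_inter, mem_filter, union_subset_iff]
  tauto

lemma ksets_filter_nonempty_eq_biUnion (X : Finset (Finset (Fin n))) :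
    (ksets n k).filter (fun S => (X.filter (· ⊆ S)).Nonempty) =
      X.biUnion (ksetsContaining n k) := by
  ext S
  simp only [ksetsContaining, mem_filter, mem_biUnion, Finset.Nonempty]
  aesop

lemma ksets_filter_eq_singleton_eq_sdiff {X : Finset (Finset (Fin n))} {e : Finset (Fin n)}
    (he : e ∈ X) :
    (ksets n k).filter (fun S => e ⊆ S ∧ X.filter (· ⊆ S) = {e}) =
      ksetsContaining n k e \ (X.erase e).biUnion (ksetsContaining n k) := by
  ext S
  simp only [ksetsContaining, mem_filter, mem_sdiff, mem_biUnion, mem_erase,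
    eq_singleton_iff_unique_mem]
  constructor
  · rintro ⟨hS, heS, -, honly⟩
    exact ⟨⟨hS, heS⟩, fun ⟨f, ⟨hfe, hf⟩, _, hfS⟩ => hfe (honly f ⟨hf, hfS⟩)⟩
  · rintro ⟨⟨hS, heS⟩, hnone⟩
    exact ⟨hS, heS, ⟨he, heS⟩, fun f ⟨hf, hfS⟩ =>
      by_contra fun hfe => hnone ⟨f, ⟨hfe, hf⟩, hS, hfS⟩⟩

lemma sum_card_ksetsContaining_of_uniform {G : Finset (Finset (Fin n))} {d : ℕ}
    (hG : ∀ e ∈ G, #e = d) (hdk : d ≤ k) :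
    ∑ e ∈ G, (#(ksetsContaining n k e) : ℝ) = #G * (n - d).choose (k - d) := by
  rw [sum_congr rfl fun e he => by rw [card_ksetsContaining (by rw [hG e he]; exact hdk), hG e he],
    sum_const, nsmul_eq_mul]

end KSets

section Spread

variable {n k d : ℕ} {δ : ℝ}

lemma sum_card_ksetsContaining_union_le {G : Finset (Finset (Fin n))} (hG : ∀ f ∈ G, #f = d)
    (hdk : 2 * d ≤ k) (hkn : 2 * k ≤ n) (hδ : 0 ≤ δ)
    (hspread : ∀ g, #g < d → codegree G g * (2 * k / n : ℝ) ^ (d - #g) ≤ δ)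
    {e : Finset (Fin n)} (he : e ∈ G) :
    ∑ f ∈ G.erase e, (#(ksetsContaining n k (e ∪ f)) : ℝ) ≤
      2 ^ d * δ * (n - d).choose (k - d) := by
  set β : ℝ := ((n - d).choose (k - d) : ℝ)
  let w : Finset (Fin n) → ℝ := fun g => (n - (2 * d - #g)).choose (k - (2 * d - #g))
  have hterm : ∀ f ∈ G.erase e, (#(ksetsContaining n k (e ∪ f)) : ℝ) = w (e ∩ f) := by
    intro f hf
    have hunion : #(e ∪ f) = 2 * d - #(e ∩ f) := by
      have := card_union_add_card_inter e f
      rw [hG e he, hG f (mem_erase.1 hf).2] at this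
      omega
    rw [card_ksetsContaining (by omega), hunion]
  have hfibre : ∀ g ∈ e.powerset.erase e, codegree G g * w g ≤ δ * β := by
    intro g hg
    obtain ⟨hge, hgsub⟩ := mem_erase.1 hg
    have hgd : #g < d :=
      hG e he ▸ card_lt_card (ssubset_of_subset_of_ne (mem_powerset.1 hgsub) hge)
    have hw : w g ≤ (2 * k / n : ℝ) ^ (d - #g) * β := by
      have := choose_sub_le_pow_mul_choose_sub_left (n := n) (k := k)
        (show d ≤ 2 * d - #g by omega) (by omega) (by omega) (by omega)
      rwa [show 2 * d - #g - d = d - #g by omega] at this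
    calc codegree G g * w g ≤ codegree G g * ((2 * k / n : ℝ) ^ (d - #g) * β) := by gcongr
      _ = (codegree G g * (2 * k / n : ℝ) ^ (d - #g)) * β := by ring
      _ ≤ δ * β := by gcongr; exact hspread g hgd
  calc ∑ f ∈ G.erase e, (#(ksetsContaining n k (e ∪ f)) : ℝ)
      = ∑ f ∈ G.erase e, w (e ∩ f) := sum_congr rfl hterm
    _ ≤ ∑ g ∈ e.powerset.erase e, codegree G g * w g :=
        sum_erase_le_sum_codegree_mul hG he w fun g => Nat.cast_nonneg _
    _ ≤ ∑ _g ∈ e.powerset.erase e, δ * β := sum_le_sum hfibre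
    _ ≤ 2 ^ d * δ * β := by
        rw [sum_const, nsmul_eq_mul, mul_assoc]
        gcongr
        calc (#(e.powerset.erase e) : ℝ) ≤ #e.powerset := by
              exact_mod_cast card_le_card (erase_subset e _)
          _ = 2 ^ d := by rw [card_powerset, hG e he]; norm_cast

lemma card_biUnion_ksetsContaining_ge {G : Finset (Finset (Fin n))} (hG : ∀ f ∈ G, #f = d)
    (hdk : 2 * d ≤ k) (hkn : 2 * k ≤ n) (hδ : 0 ≤ δ)
    (hspread : ∀ g, #g < d → codegree G g * (2 * k / n : ℝ) ^ (d - #g) ≤ δ) :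
    (1 - 2 ^ d * δ) * #G * (n - d).choose (k - d) ≤ #(G.biUnion (ksetsContaining n k)) := by
  have hbonf : (∑ e ∈ G, #(ksetsContaining n k e) : ℝ) ≤
      #(G.biUnion (ksetsContaining n k)) +
      ∑ e ∈ G, ∑ f ∈ G.erase e, (#(ksetsContaining n k (e ∪ f)) : ℝ) := by
    simp only [← ksetsContaining_inter]
    exact_mod_cast sum_card_le_card_biUnion_add_sum_card_inter G (ksetsContaining n k)
  have hsingle := sum_card_ksetsContaining_of_uniform (k := k) hG (by omega)
  have hpairs := sum_le_sum fun e he =>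
    sum_card_ksetsContaining_union_le hG hdk hkn hδ hspread (e := e) he
  rw [sum_const, nsmul_eq_mul] at hpairs
  nlinarith

end Spread

section Coverage

variable {n k d : ℕ} {δ : ℝ}

lemma mul_card_ksetsContaining_le {g : Finset (Fin n)} {c : ℕ} (hg : #g < d) (hdk : 2 * d ≤ k)
    (hkn : k ≤ n) (hsat : δ ≤ 2 * c * (2 * k / n : ℝ) ^ (d - #g)) :
    δ * #(ksetsContaining n k g) ≤ 2 * 4 ^ d * c * (n - d).choose (k - d) := by
  have hk : (0 : ℝ) < k := by exact_mod_cast (show 0 < k by omega)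
  have hn : (0 : ℝ) < n := by exact_mod_cast (show 0 < n by omega)
  have hchoose := choose_sub_le_pow_mul_choose_sub_right (n := n) hg.le hkn hdk
  have hratio : (2 * k / n : ℝ) * (2 * n / k) = 4 := by field_simp; ring
  rw [card_ksetsContaining (by omega)]
  calc δ * ((n - #g).choose (k - #g) : ℝ)
      ≤ 2 * c * (2 * k / n : ℝ) ^ (d - #g) *
          ((2 * n / k) ^ (d - #g) * (n - d).choose (k - d)) := by
        gcongr
    _ = 2 * c * 4 ^ (d - #g) * (n - d).choose (k - d) := by rw [← hratio, mul_pow]; ring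
    _ ≤ 2 * 4 ^ d * c * (n - d).choose (k - d) := by
        rw [mul_right_comm (2 : ℝ)]
        gcongr
        · norm_num
        · omega

lemma card_biUnion_ksetsContaining_le {H G : Finset (Finset (Fin n))} (hH : ∀ e ∈ H, #e = d)
    (hGH : G ⊆ H) (hdk : 2 * d ≤ k) (hkn : k ≤ n) (hδ0 : 0 ≤ δ) (hδ1 : δ ≤ 1)
    (hsat : ∀ e ∈ H, e ∉ G →
      ∃ g ⊆ e, #g < d ∧ δ ≤ 2 * codegree G g * (2 * k / n : ℝ) ^ (d - #g)) :
    δ * #(H.biUnion (ksetsContaining n k)) ≤ 3 * 8 ^ d * #G * (n - d).choose (k - d) := by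
  set β : ℝ := ((n - d).choose (k - d) : ℝ)
  let saturated := univ.filter fun g : Finset (Fin n) =>
    #g < d ∧ δ ≤ 2 * codegree G g * (2 * k / n : ℝ) ^ (d - #g)
  have hcover : H.biUnion (ksetsContaining n k) ⊆
      G.biUnion (ksetsContaining n k) ∪ saturated.biUnion (ksetsContaining n k) := by
    intro S hS
    obtain ⟨e, he, heS⟩ := mem_biUnion.1 hS
    by_cases heG : e ∈ G
    · exact mem_union_left _ (mem_biUnion.2 ⟨e, heG, heS⟩)
    · obtain ⟨g, hge, hgsat⟩ := hsat e he heG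
      obtain ⟨hS, heS⟩ := mem_filter.1 heS
      exact mem_union_right _ (mem_biUnion.2
        ⟨g, mem_filter.2 ⟨mem_univ g, hgsat⟩, mem_filter.2 ⟨hS, hge.trans heS⟩⟩)
  have hGpart : (#(G.biUnion (ksetsContaining n k)) : ℝ) ≤ #G * β := by
    rw [← sum_card_ksetsContaining_of_uniform (fun f hf => hH f (hGH hf)) (by omega)]
    exact_mod_cast card_biUnion_le
  have hsaturatedPart :
      δ * ∑ g ∈ saturated, (#(ksetsContaining n k g) : ℝ) ≤ 2 * 8 ^ d * #G * β := by
    have hcodeg : (∑ g ∈ saturated, codegree G g : ℝ) ≤ 2 ^ d * #G := by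
      exact_mod_cast sum_codegree_le (fun f hf => hH f (hGH hf)) saturated
    rw [mul_sum]
    calc ∑ g ∈ saturated, δ * (#(ksetsContaining n k g) : ℝ)
        ≤ ∑ g ∈ saturated, 2 * 4 ^ d * (codegree G g : ℝ) * β := sum_le_sum fun g hg =>
          mul_card_ksetsContaining_le (mem_filter.1 hg).2.1 hdk hkn (mem_filter.1 hg).2.2
      _ = 2 * 4 ^ d * (∑ g ∈ saturated, (codegree G g : ℝ)) * β := by rw [mul_sum, sum_mul]
      _ ≤ 2 * 4 ^ d * (2 ^ d * #G) * β := by gcongr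
      _ = 2 * 8 ^ d * #G * β := by rw [show (8 : ℝ) = 4 * 2 by norm_num, mul_pow]; ring
  have hunion : (#(H.biUnion (ksetsContaining n k)) : ℝ) ≤
      #(G.biUnion (ksetsContaining n k)) +
        ∑ g ∈ saturated, (#(ksetsContaining n k g) : ℝ) := by
    exact_mod_cast (card_le_card hcover).trans
      ((card_union_le _ _).trans (add_le_add le_rfl card_biUnion_le))
  have h8 : (1 : ℝ) ≤ 8 ^ d := one_le_pow₀ (by norm_num)
  have hGβ : (0 : ℝ) ≤ #G * β := by positivity
  nlinarith

end Coverage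

lemma exists_pruned_subhypergraph_of_le_one {ε : ℝ} (hε0 : 0 < ε) (hε1 : ε ≤ 1)
    {n k d : ℕ} (hd : 1 ≤ d) (hdk : 2 * d ≤ k) (hkn : k ≤ n)
    (hr : (2 * k / n : ℝ) ≤ ε / 2 ^ (d + 1))
    {H : Finset (Finset (Fin n))} (hH : ∀ e ∈ H, #e = d) :
    ∃ H' ⊆ H, ε * (ε / 2 ^ (d + 1)) / (6 * 8 ^ d) * #(H.biUnion (ksetsContaining n k)) ≤
        #(H'.biUnion (ksetsContaining n k)) ∧
      ∀ e ∈ H', (1 - ε) * #(ksetsContaining n k e) ≤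
        #(ksetsContaining n k e \ (H'.erase e).biUnion (ksetsContaining n k)) := by
  set δ := ε / 2 ^ (d + 1)
  set β : ℝ := ((n - d).choose (k - d) : ℝ)
  have hn : (0 : ℝ) < n := by exact_mod_cast (show 0 < n by omega)
  have hr0 : (0 : ℝ) < 2 * k / n := by
    have : (0 : ℝ) < k := by exact_mod_cast (show 0 < k by omega)
    positivity
  have hδ : δ ≤ 1 / 2 := by
    rw [div_le_div_iff₀ (by positivity) two_pos]
    have : (2 : ℝ) ^ 2 ≤ 2 ^ (d + 1) := pow_le_pow_right₀ one_le_two (by omega)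
    nlinarith
  have hkn2 : 2 * k ≤ n := by
    have : (2 * k / n : ℝ) ≤ 1 := by linarith
    rw [div_le_one hn] at this
    exact_mod_cast this
  obtain ⟨G, hGH, hspread, hsat⟩ :=
    exists_codegree_mul_pow_le_and_saturated H d hr0 (by linarith) hr
  have hGcover :=
    card_biUnion_ksetsContaining_le hH hGH hdk hkn (hr0.le.trans hr) (by linarith) hsat
  have hGspread := card_biUnion_ksetsContaining_ge (fun f hf => hH f (hGH hf)) hdk hkn2
    (hr0.le.trans hr) hspread
  have hGsum := sum_card_ksetsContaining_of_uniform (k := k) (fun f hf => hH f (hGH hf)) (by omega)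
  obtain ⟨H', hH'H, hpotential, hunique⟩ :=
    exists_subset_potential_le_card_biUnion H (ksetsContaining n k) (sub_nonneg.2 hε1)
  refine ⟨H', hH'H, ?_, hunique⟩
  have hpot := hpotential G hGH
  rw [hGsum] at hpot
  have h2δ : 2 ^ d * δ = ε / 2 := by
    simp only [δ]; rw [pow_succ]; field_simp
  rw [h2δ] at hGspread
  have h8 : (0 : ℝ) < 6 * 8 ^ d := by positivity
  calc ε * δ / (6 * 8 ^ d) * #(H.biUnion (ksetsContaining n k))
      = ε / 2 * (δ * #(H.biUnion (ksetsContaining n k))) / (3 * 8 ^ d) := by ring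
    _ ≤ ε / 2 * (3 * 8 ^ d * #G * β) / (3 * 8 ^ d) := by gcongr
    _ = ε / 2 * (#G * β) := by field_simp
    _ ≤ _ := by nlinarith

/-- `H|_S` is `H.filter (· ⊆ S)`; probabilities under `ν_{n,k}` are counts of members of
`ksets n k`, and the conditional probability in (2) appears with its denominator cleared. -/
theorem stmt3 :
    ∀ ε : ℝ, 0 < ε → ∀ d : ℕ, 1 ≤ d →
      ∃ p₀ : ℝ, 0 < p₀ ∧ ∃ c : ℝ, 0 < c ∧
        ∀ (n k : ℕ), 2 * d ≤ k → k ≤ n → (k : ℝ) / (n : ℝ) ≤ p₀ →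
          ∀ H : Finset (Finset (Fin n)), (∀ e ∈ H, e.card = d) →
            ∃ H' ⊆ H,
              (c * (((ksets n k).filter
                      (fun S => (H.filter (fun e => e ⊆ S)).Nonempty)).card : ℝ) ≤
                (((ksets n k).filter
                      (fun S => (H'.filter (fun e => e ⊆ S)).Nonempty)).card : ℝ)) ∧
              ∀ e ∈ H',
                (1 - ε) * (((ksets n k).filter (fun S => e ⊆ S)).card : ℝ) ≤
                  (((ksets n k).filter
                    (fun S => e ⊆ S ∧ H'.filter (fun e' => e' ⊆ S) = {e})).card : ℝ) := by
  intro ε hε d hd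
  set ε' := min ε 1
  have hε' : 0 < ε' := lt_min hε one_pos
  refine ⟨ε' / 2 ^ (d + 2), by positivity, ε' * (ε' / 2 ^ (d + 1)) / (6 * 8 ^ d),
    by positivity, fun n k hdk hkn hp H hH => ?_⟩
  have hr : (2 * k / n : ℝ) ≤ ε' / 2 ^ (d + 1) :=
    calc (2 * k / n : ℝ) = 2 * (k / n) := mul_div_assoc _ _ _
      _ ≤ 2 * (ε' / 2 ^ (d + 2)) := by gcongr
      _ = ε' / 2 ^ (d + 1) := by rw [pow_succ 2 (d + 1)]; field_simp
  obtain ⟨H', hH'H, hcover, hunique⟩ :=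
    exists_pruned_subhypergraph_of_le_one hε' (min_le_right _ _) hd hdk hkn hr hH
  refine ⟨H', hH'H, ?_, fun e he => ?_⟩
  · rwa [ksets_filter_nonempty_eq_biUnion, ksets_filter_nonempty_eq_biUnion]
  · rw [ksets_filter_eq_singleton_eq_sdiff he]
    calc (1 - ε) * (#(ksetsContaining n k e) : ℝ) ≤ (1 - ε') * #(ksetsContaining n k e) := by
          gcongr; exact min_le_left _ _
      _ ≤ _ := hunique e he
end

section
/- Fix constants c > 0 and an integer d ≥ 0. There exist p₀ > 0 and a constant c′ > 0 (both depending only on c and d) such that for every p ∈ (0,p₀) and every d-uniform hypergraph H on a finite vertex set, there exists a subhypergraph H′ ⊆ H (obtained by removing hyperedges) such that: (1) H′ has branching factor c/p; and (2) hit_p(H′) ≥ c′ · hit_p(H). -/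
/-! Let `H'` be a largest subfamily of `H` with branching factor `K = c₀ / p`. By maximality
every edge of `H \ H'` contains a heavy set `A`, one whose degree in `H'` is about
`K ^ (d - |A|)`, so `p ^ |A| ≲ c₀⁻ᵈ p ^ d deg_{H'} A`; a union bound over `H'` and the heavy
sets, with double counting of degrees, gives `hit_p(H) ≤ hit_p(H') + O(|H'| p ^ d)`. In the
other direction, the branching bound makes the overlaps of pairs of edges of `H'` negligible,
and Bonferroni's inequality `1[k ≥ 1] ≥ k - k (k - 1) / 2` gives
`hit_p(H') ≥ |H'| p ^ d / 2`. -/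

open Finset

/-- `hitp V p H = Pr_{S ∼ µ_p}[H|_S ≠ ∅]`, where `µ_p` puts each vertex of `V`
in `S` independently with probability `p`, and `H|_S = {e ∈ H : e ⊆ S}`. -/
def hitp (V : Type) [Fintype V] [DecidableEq V] (p : ℝ) (H : Finset (Finset V)) : ℝ :=
  ∑ S : Finset V,
    if (H.filter (fun e => e ⊆ S)).Nonempty then
      p ^ S.card * (1 - p) ^ (Fintype.card V - S.card)
    else 0

/-- `H` has branching factor `ρ`: for every `A` and `r ≥ 0`, the number of
hyperedges `e ∈ H` with `e ⊇ A` and `|e| = |A| + r` is at most `ρ^r`. -/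
def branching (V : Type) [DecidableEq V] (H : Finset (Finset V)) (ρ : ℝ) : Prop :=
  ∀ (A : Finset V) (r : ℕ),
    ((H.filter (fun e => A ⊆ e ∧ e.card = A.card + r)).card : ℝ) ≤ ρ ^ r

section Weights

variable {V : Type} [Fintype V]

noncomputable def bernoulliWeight (V : Type) [Fintype V] (p : ℝ) (S : Finset V) : ℝ :=
  p ^ #S * (1 - p) ^ (Fintype.card V - #S)

theorem bernoulliWeight_nonneg {p : ℝ} (hp0 : 0 ≤ p) (hp1 : p ≤ 1) (S : Finset V) :
    0 ≤ bernoulliWeight V p S := by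
  have : 0 ≤ 1 - p := by linarith
  unfold bernoulliWeight
  positivity

variable [DecidableEq V]

theorem hitp_eq_sum (p : ℝ) (H : Finset (Finset V)) :
    hitp V p H = ∑ S, if {e ∈ H | e ⊆ S}.Nonempty then bernoulliWeight V p S else 0 :=
  rfl

theorem sum_bernoulliWeight_of_subset (p : ℝ) (T : Finset V) :
    ∑ S, (if T ⊆ S then bernoulliWeight V p S else 0) = p ^ #T := by
  -- expand `∏ i, (p + [i ∉ T] (1 - p))` as a sum over the sets `S` of factors where `p` is chosen
  have hterm : ∀ S : Finset V,
      (∏ _i ∈ S, p) * ∏ i ∈ univ \ S, (if i ∈ T then 0 else 1 - p) =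
        if T ⊆ S then bernoulliWeight V p S else 0 := by
    intro S
    split_ifs with hTS
    · have hout : ∀ i ∈ univ \ S, (if i ∈ T then (0 : ℝ) else 1 - p) = 1 - p :=
        fun i hi => if_neg fun hiT => (mem_sdiff.1 hi).2 (hTS hiT)
      rw [prod_congr rfl hout, prod_const, prod_const, card_univ_sdiff, bernoulliWeight]
    · obtain ⟨i, hiT, hiS⟩ := not_subset.1 hTS
      exact mul_eq_zero_of_right _ (prod_eq_zero (mem_sdiff.2 ⟨mem_univ i, hiS⟩) (if_pos hiT))
  have hfactor : ∀ i : V, (p + if i ∈ T then 0 else 1 - p) = if i ∈ T then p else 1 := by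
    intro i
    split_ifs <;> ring
  calc ∑ S, (if T ⊆ S then bernoulliWeight V p S else 0)
      = ∏ i, (p + if i ∈ T then 0 else 1 - p) := by
        rw [prod_add, powerset_univ]
        exact (sum_congr rfl fun S _ => hterm S).symm
    _ = p ^ #T := by
        rw [prod_congr rfl fun i _ => hfactor i, prod_ite_mem, univ_inter, prod_const]

theorem sum_card_filter_subset_mul_bernoulliWeight {ι : Type} (p : ℝ) (I : Finset ι)
    (t : ι → Finset V) :
    ∑ S, (#{i ∈ I | t i ⊆ S} : ℝ) * bernoulliWeight V p S = ∑ i ∈ I, p ^ #(t i) := by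
  simp_rw [natCast_card_filter, sum_mul, ite_mul, one_mul, zero_mul]
  rw [sum_comm]
  exact sum_congr rfl fun i _ => sum_bernoulliWeight_of_subset p (t i)

variable {p : ℝ}

theorem hitp_mono_of_forall_exists_subset (hp0 : 0 ≤ p) (hp1 : p ≤ 1)
    {H G : Finset (Finset V)} (h : ∀ e ∈ H, ∃ g ∈ G, g ⊆ e) : hitp V p H ≤ hitp V p G := by
  refine sum_le_sum fun S _ => ?_
  split_ifs with hH hG
  · exact le_rfl
  · obtain ⟨e, he⟩ := hH
    obtain ⟨g, hg, hge⟩ := h e (mem_filter.1 he).1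
    exact absurd ⟨g, mem_filter.2 ⟨hg, hge.trans (mem_filter.1 he).2⟩⟩ hG
  · exact bernoulliWeight_nonneg hp0 hp1 S
  · exact le_rfl

theorem hitp_union_le (hp0 : 0 ≤ p) (hp1 : p ≤ 1) (H G : Finset (Finset V)) :
    hitp V p (H ∪ G) ≤ hitp V p H + ∑ g ∈ G, p ^ #g := by
  have hG : ∑ g ∈ G, p ^ #g = ∑ S, ∑ g ∈ G, if g ⊆ S then bernoulliWeight V p S else 0 := by
    rw [sum_comm]
    exact sum_congr rfl fun g _ => (sum_bernoulliWeight_of_subset p g).symm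
  rw [hG, hitp_eq_sum, hitp_eq_sum, ← sum_add_distrib]
  refine sum_le_sum fun S _ => ?_
  have hw := bernoulliWeight_nonneg hp0 hp1 S
  have hsum_nonneg : 0 ≤ ∑ g ∈ G, if g ⊆ S then bernoulliWeight V p S else 0 :=
    sum_nonneg fun g _ => by split_ifs <;> simp [hw]
  split_ifs with hHG hH
  · linarith
  · obtain ⟨g, hg⟩ := hHG
    obtain ⟨hgHG, hgS⟩ := mem_filter.1 hg
    have hgG : g ∈ G := (mem_union.1 hgHG).resolve_left fun hgH => hH ⟨g, mem_filter.2 ⟨hgH, hgS⟩⟩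
    simpa [hgS] using single_le_sum
      (f := fun g => if g ⊆ S then bernoulliWeight V p S else 0)
      (fun g _ => by split_ifs <;> simp [hw]) hgG
  · linarith
  · linarith

theorem bonferroni_nat (k : ℕ) : (3 * k - (k : ℝ) ^ 2) / 2 ≤ if 0 < k then 1 else 0 := by
  rcases Nat.lt_trichotomy k 1 with hk | rfl | hk
  · simp [Nat.lt_one_iff.1 hk]
  · norm_num
  · have : (2 : ℝ) ≤ k := by exact_mod_cast hk
    rw [if_pos (by omega)]
    nlinarith

theorem sum_pow_card_sub_le_hitp (hp0 : 0 ≤ p) (hp1 : p ≤ 1) (H : Finset (Finset V)) :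
    ∑ e ∈ H, p ^ #e - (∑ e ∈ H, ∑ f ∈ H.erase e, p ^ #(e ∪ f)) / 2 ≤ hitp V p H := by
  have hsq : ∀ S, (#{e ∈ H | e ⊆ S} : ℝ) ^ 2 = #{x ∈ H ×ˢ H | x.1 ∪ x.2 ⊆ S} := by
    intro S
    have : {x ∈ H ×ˢ H | x.1 ∪ x.2 ⊆ S} = {e ∈ H | e ⊆ S} ×ˢ {e ∈ H | e ⊆ S} := by
      ext
      simp only [mem_filter, mem_product, union_subset_iff]
      tauto
    rw [this, card_product]
    push_cast
    ring
  have hfirst := sum_card_filter_subset_mul_bernoulliWeight p H id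
  have hsecond := sum_card_filter_subset_mul_bernoulliWeight p (H ×ˢ H) fun x => x.1 ∪ x.2
  simp_rw [← hsq, sum_product] at hsecond
  have hdiag : ∑ e ∈ H, ∑ f ∈ H, p ^ #(e ∪ f) =
      ∑ e ∈ H, p ^ #e + ∑ e ∈ H, ∑ f ∈ H.erase e, p ^ #(e ∪ f) := by
    rw [← sum_add_distrib]
    exact sum_congr rfl fun e he => by rw [← add_sum_erase _ _ he, union_self]
  calc ∑ e ∈ H, p ^ #e - (∑ e ∈ H, ∑ f ∈ H.erase e, p ^ #(e ∪ f)) / 2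
      = ∑ S, (3 * (#{e ∈ H | e ⊆ S} : ℝ) - (#{e ∈ H | e ⊆ S} : ℝ) ^ 2) / 2 *
          bernoulliWeight V p S := by
        simp_rw [sub_div, sub_mul, sum_sub_distrib, div_mul_eq_mul_div, ← sum_div, mul_assoc,
          ← mul_sum]
        simp only [id] at hfirst
        rw [hfirst, hsecond, hdiag]
        ring
    _ ≤ hitp V p H := by
        rw [hitp_eq_sum]
        refine sum_le_sum fun S _ => ?_
        have h := mul_le_mul_of_nonneg_right (bonferroni_nat #{e ∈ H | e ⊆ S})
          (bernoulliWeight_nonneg hp0 hp1 S)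
        simpa only [card_pos, ite_mul, one_mul, zero_mul] using h

end Weights

section Branching

variable {V : Type} [DecidableEq V]

def degree (H : Finset (Finset V)) (A : Finset V) : ℕ :=
  #{f ∈ H | A ⊆ f}

theorem branching_empty {ρ : ℝ} (hρ : 0 ≤ ρ) : branching V ∅ ρ :=
  fun _ r => by simpa using pow_nonneg hρ r

theorem branching.mono {H : Finset (Finset V)} {ρ σ : ℝ} (h : branching V H ρ) (hρ : 0 ≤ ρ)
    (hρσ : ρ ≤ σ) : branching V H σ :=
  fun A r => (h A r).trans (pow_le_pow_left₀ hρ hρσ r)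

theorem degree_le_of_branching {H : Finset (Finset V)} {ρ : ℝ} {d : ℕ}
    (hd : ∀ f ∈ H, #f = d) (hH : branching V H ρ) {A : Finset V} (hA : #A ≤ d) :
    (degree H A : ℝ) ≤ ρ ^ (d - #A) := by
  have : {f ∈ H | A ⊆ f} = {f ∈ H | A ⊆ f ∧ #f = #A + (d - #A)} :=
    filter_congr fun f hf => ⟨fun h => ⟨h, by have := hd f hf; omega⟩, And.left⟩
  rw [degree, this]
  exact hH A (d - #A)

theorem sum_degree_le {H : Finset (Finset V)} {d : ℕ} (hd : ∀ f ∈ H, #f = d)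
    (𝒜 : Finset (Finset V)) : ∑ A ∈ 𝒜, degree H A ≤ 2 ^ d * #H := by
  calc ∑ A ∈ 𝒜, degree H A = ∑ f ∈ H, #{A ∈ 𝒜 | A ⊆ f} := by
        simpa only [degree, bipartiteAbove, bipartiteBelow] using
          sum_card_bipartiteAbove_eq_sum_card_bipartiteBelow (s := 𝒜) (t := H) (· ⊆ ·)
    _ ≤ ∑ f ∈ H, #f.powerset :=
        sum_le_sum fun f _ => card_le_card fun A hA => mem_powerset.2 (mem_filter.1 hA).2
    _ = 2 ^ d * #H := by
        rw [sum_congr rfl fun f hf => by rw [card_powerset, hd f hf], sum_const, smul_eq_mul,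
          mul_comm]

theorem exists_maximal_branching_subset (H : Finset (Finset V)) {ρ : ℝ} (hρ : 0 ≤ ρ) :
    ∃ H' ⊆ H, branching V H' ρ ∧ ∀ e ∈ H, e ∉ H' → ¬ branching V (insert e H') ρ := by
  classical
  obtain ⟨H', hH', hmax⟩ := exists_max_image {G ∈ H.powerset | branching V G ρ} card
    ⟨∅, mem_filter.2 ⟨empty_mem_powerset H, branching_empty hρ⟩⟩
  obtain ⟨hsub, hbr⟩ := mem_filter.1 hH'
  refine ⟨H', mem_powerset.1 hsub, hbr, fun e he heH' hins => ?_⟩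
  have := hmax _ (mem_filter.2 ⟨mem_powerset.2 (insert_subset he (mem_powerset.1 hsub)), hins⟩)
  rw [card_insert_of_notMem heH'] at this
  omega

variable [Fintype V]

-- the sets `A` at which adding one more edge through `A` can break the bound `ρ ^ (d - |A|)`
noncomputable def heavySets (H : Finset (Finset V)) (ρ : ℝ) (d : ℕ) : Finset (Finset V) :=
  {A | #A < d ∧ ρ ^ (d - #A) - 1 < degree H A}

theorem exists_mem_heavySets_subset_of_not_branching_insert {H : Finset (Finset V)} {ρ : ℝ}
    {d : ℕ} {e : Finset V} (hρ : 0 ≤ ρ) (hd : ∀ f ∈ insert e H, #f = d) (hH : branching V H ρ)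
    (hins : ¬ branching V (insert e H) ρ) : ∃ A ∈ heavySets H ρ d, A ⊆ e := by
  simp only [branching, not_forall, not_le] at hins
  obtain ⟨A, r, hAr⟩ := hins
  have hAe : A ⊆ e := by
    by_contra hAe
    rw [filter_insert, if_neg fun h => hAe h.1] at hAr
    exact (hH A r).not_gt hAr
  obtain ⟨f, hf⟩ : {f ∈ insert e H | A ⊆ f ∧ #f = #A + r}.Nonempty :=
    card_pos.1 (by exact_mod_cast (pow_nonneg hρ r).trans_lt hAr)
  obtain ⟨hfmem, hAf, hfcard⟩ := mem_filter.1 hf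
  have hrd : d - #A = r := by rw [← hd f hfmem]; omega
  have hcount : (#{f ∈ insert e H | A ⊆ f ∧ #f = #A + r} : ℝ) ≤ degree H A + 1 := by
    have := (card_insert_le e {f ∈ H | A ⊆ f ∧ #f = #A + r}).trans
      (Nat.succ_le_succ (card_le_card fun g hg => mem_filter.2
        ⟨(mem_filter.1 hg).1, (mem_filter.1 hg).2.1⟩))
    have hecard : #e = #A + r := by rw [← hfcard, hd e (mem_insert_self e H), hd f hfmem]
    rw [filter_insert, if_pos ⟨hAe, hecard⟩]
    exact_mod_cast this
  have hr : r ≠ 0 := by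
    rintro rfl
    have hle : #{f ∈ insert e H | A ⊆ f ∧ #f = #A + 0} ≤ 1 := card_le_one.2 fun g hg g' hg' => by
      have hg := (mem_filter.1 hg).2
      have hg' := (mem_filter.1 hg').2
      rw [← eq_of_subset_of_card_le hg.1 hg.2.le, ← eq_of_subset_of_card_le hg'.1 hg'.2.le]
    simp only [pow_zero] at hAr
    exact absurd hAr (by exact_mod_cast hle.not_gt)
  refine ⟨A, mem_filter.2 ⟨mem_univ A, by omega, ?_⟩, hAe⟩
  rw [hrd]
  linarith

end Branching

section Pruning

variable {V : Type} [DecidableEq V] {H : Finset (Finset V)} {d : ℕ} {c p : ℝ}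

theorem sum_pow_card_union_of_inter_eq_le (hp : 0 < p) (hc0 : 0 ≤ c) (hc1 : c ≤ 1)
    (hd : ∀ f ∈ H, #f = d) (hH : branching V H (c / p)) {e B : Finset V} (he : e ∈ H)
    (hB : B ⊆ e) : ∑ f ∈ H.erase e with e ∩ f = B, p ^ #(e ∪ f) ≤ c * p ^ d := by
  rcases eq_or_ne B e with rfl | hBe
  · rw [sum_eq_zero]
    · positivity
    intro f hf
    obtain ⟨hfH, hinter⟩ := mem_filter.1 hf
    have hfB : B = f :=
      eq_of_subset_of_card_le (inter_eq_left.1 hinter)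
        (by rw [hd f (mem_of_mem_erase hfH), hd B he])
    exact absurd hfB.symm (ne_of_mem_erase hfH)
  have hBd : #B < d := hd e he ▸ card_lt_card (ssubset_of_subset_of_ne hB hBe)
  calc ∑ f ∈ H.erase e with e ∩ f = B, p ^ #(e ∪ f)
      = ∑ f ∈ H.erase e with e ∩ f = B, p ^ (d + (d - #B)) := by
        refine sum_congr rfl fun f hf => ?_
        obtain ⟨hfH, rfl⟩ := mem_filter.1 hf
        have := card_union_add_card_inter e f
        rw [hd e he, hd f (mem_of_mem_erase hfH)] at this
        congr 1
        omega
    _ ≤ degree H B * p ^ (d + (d - #B)) := by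
        rw [sum_const, nsmul_eq_mul]
        gcongr
        refine card_le_card fun f hf => ?_
        obtain ⟨hfH, hBf⟩ := mem_filter.1 hf
        exact mem_filter.2 ⟨mem_of_mem_erase hfH, hBf ▸ inter_subset_right⟩
    _ ≤ (c / p) ^ (d - #B) * p ^ (d + (d - #B)) := by
        gcongr
        exact degree_le_of_branching hd hH hBd.le
    _ = c ^ (d - #B) * p ^ d := by
        rw [pow_add, div_pow]
        field_simp
    _ ≤ c * p ^ d := by
        gcongr
        exact pow_le_of_le_one hc0 hc1 (by omega)

theorem sum_erase_pow_card_union_le (hp : 0 < p) (hc0 : 0 ≤ c) (hc1 : c ≤ 1)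
    (hd : ∀ f ∈ H, #f = d) (hH : branching V H (c / p)) {e : Finset V} (he : e ∈ H) :
    ∑ f ∈ H.erase e, p ^ #(e ∪ f) ≤ 2 ^ d * c * p ^ d := by
  -- sort the `f` by their trace `e ∩ f`
  calc ∑ f ∈ H.erase e, p ^ #(e ∪ f)
      = ∑ B ∈ e.powerset, ∑ f ∈ H.erase e with e ∩ f = B, p ^ #(e ∪ f) :=
        (sum_fiberwise_of_maps_to (fun f _ => mem_powerset.2 inter_subset_left) _).symm
    _ ≤ ∑ _B ∈ e.powerset, c * p ^ d := sum_le_sum fun B hB =>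
        sum_pow_card_union_of_inter_eq_le hp hc0 hc1 hd hH he (mem_powerset.1 hB)
    _ = 2 ^ d * c * p ^ d := by
        rw [sum_const, card_powerset, hd e he, nsmul_eq_mul]
        push_cast
        ring

variable [Fintype V]

theorem card_mul_pow_le_two_mul_hitp (hp : 0 < p) (hp1 : p ≤ 1) (hc0 : 0 ≤ c)
    (hcd : 2 ^ d * c ≤ 1) (hd : ∀ f ∈ H, #f = d) (hH : branching V H (c / p)) :
    #H * p ^ d ≤ 2 * hitp V p H := by
  have hc1 : c ≤ 1 := (le_mul_of_one_le_left hc0 (one_le_pow₀ one_le_two)).trans hcd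
  have hsingles : ∑ e ∈ H, p ^ #e = #H * p ^ d := by
    rw [sum_congr rfl fun e he => by rw [hd e he], sum_const, nsmul_eq_mul]
  have hpairs : ∑ e ∈ H, ∑ f ∈ H.erase e, p ^ #(e ∪ f) ≤ #H * p ^ d :=
    calc ∑ e ∈ H, ∑ f ∈ H.erase e, p ^ #(e ∪ f)
        ≤ ∑ _e ∈ H, 2 ^ d * c * p ^ d :=
          sum_le_sum fun e he => sum_erase_pow_card_union_le hp hc0 hc1 hd hH he
      _ = #H * (2 ^ d * c * p ^ d) := by rw [sum_const, nsmul_eq_mul]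
      _ ≤ #H * p ^ d := by
          gcongr
          exact mul_le_of_le_one_left (by positivity) hcd
  have := sum_pow_card_sub_le_hitp hp.le hp1 H
  linarith

theorem pow_card_le_of_mem_heavySets (hp : 0 < p) (hc0 : 0 < c) (hc1 : c ≤ 1) (hK : 2 ≤ c / p)
    {A : Finset V} (hA : A ∈ heavySets H (c / p) d) :
    p ^ #A ≤ 2 / c ^ d * p ^ d * degree H A := by
  obtain ⟨hAd, hdeg⟩ := (mem_filter.1 hA).2
  set r := d - #A
  have hKr : c / p ≤ (c / p) ^ r := le_self_pow₀ (by linarith) (by omega)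
  have hrel : p ^ #A * c ^ r = p ^ d * (c / p) ^ r := by
    rw [div_pow, ← show #A + r = d by omega, pow_add]
    field_simp
  rw [div_mul_eq_mul_div, div_mul_eq_mul_div, le_div_iff₀ (by positivity)]
  calc p ^ #A * c ^ d ≤ p ^ #A * c ^ r :=
        mul_le_mul_of_nonneg_left (pow_le_pow_of_le_one hc0.le hc1 (Nat.sub_le d #A))
          (by positivity)
    _ = p ^ d * (c / p) ^ r := hrel
    _ ≤ p ^ d * (2 * degree H A) := by
        gcongr
        linarith
    _ = 2 * p ^ d * degree H A := by ring

theorem sum_pow_card_heavySets_le (hp : 0 < p) (hc0 : 0 < c) (hc1 : c ≤ 1) (hK : 2 ≤ c / p)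
    (hd : ∀ f ∈ H, #f = d) :
    ∑ A ∈ heavySets H (c / p) d, p ^ #A ≤ 2 ^ (d + 1) / c ^ d * (#H * p ^ d) :=
  calc ∑ A ∈ heavySets H (c / p) d, p ^ #A
      ≤ ∑ A ∈ heavySets H (c / p) d, 2 / c ^ d * p ^ d * degree H A :=
        sum_le_sum fun A hA => pow_card_le_of_mem_heavySets hp hc0 hc1 hK hA
    _ = 2 / c ^ d * p ^ d * (∑ A ∈ heavySets H (c / p) d, degree H A : ℕ) := by
        rw [← mul_sum]
        push_cast
        rfl
    _ ≤ 2 / c ^ d * p ^ d * (2 ^ d * #H) := by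
        gcongr
        exact_mod_cast sum_degree_le hd _
    _ = 2 ^ (d + 1) / c ^ d * (#H * p ^ d) := by ring

theorem exists_branching_subset_hitp_le (hp : 0 < p) (hcd : 2 ^ d * c ≤ 1) (hK : 2 ≤ c / p)
    (H : Finset (Finset V)) (hd : ∀ e ∈ H, #e = d) :
    ∃ H' ⊆ H, branching V H' (c / p) ∧ hitp V p H ≤ (1 + 2 ^ (d + 2) / c ^ d) * hitp V p H' := by
  have hpc : 2 * p ≤ c := (le_div_iff₀ hp).1 hK
  have hc0 : 0 < c := by linarith
  have hc1 : c ≤ 1 := (le_mul_of_one_le_left hc0.le (one_le_pow₀ one_le_two)).trans hcd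
  have hp1 : p ≤ 1 := by linarith
  obtain ⟨H', hsub, hbr, hmax⟩ := exists_maximal_branching_subset H (by positivity : 0 ≤ c / p)
  have hd' : ∀ e ∈ H', #e = d := fun e he => hd e (hsub he)
  have hcover : ∀ e ∈ H, ∃ g ∈ H' ∪ heavySets H' (c / p) d, g ⊆ e := by
    intro e he
    by_cases he' : e ∈ H'
    · exact ⟨e, mem_union_left _ he', subset_rfl⟩
    obtain ⟨A, hA, hAe⟩ := exists_mem_heavySets_subset_of_not_branching_insert
      (by positivity) ((forall_mem_insert _ _ _).2 ⟨hd e he, hd'⟩) hbr (hmax e he he')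
    exact ⟨A, mem_union_right _ hA, hAe⟩
  refine ⟨H', hsub, hbr, ?_⟩
  calc hitp V p H ≤ hitp V p (H' ∪ heavySets H' (c / p) d) :=
        hitp_mono_of_forall_exists_subset hp.le hp1 hcover
    _ ≤ hitp V p H' + ∑ A ∈ heavySets H' (c / p) d, p ^ #A := hitp_union_le hp.le hp1 _ _
    _ ≤ hitp V p H' + 2 ^ (d + 1) / c ^ d * (#H' * p ^ d) := by
        gcongr
        exact sum_pow_card_heavySets_le hp hc0 hc1 hK hd'
    _ ≤ hitp V p H' + 2 ^ (d + 1) / c ^ d * (2 * hitp V p H') := by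
        have := card_mul_pow_le_two_mul_hitp hp hp1 hc0.le hcd hd' hbr
        gcongr
    _ = (1 + 2 ^ (d + 2) / c ^ d) * hitp V p H' := by ring

end Pruning

/-- Hypergraph pruning lemma, `µ_p`-biased setting. -/
theorem stmt4 :
    ∀ c : ℝ, 0 < c → ∀ d : ℕ,
      ∃ p₀ : ℝ, 0 < p₀ ∧ ∃ c' : ℝ, 0 < c' ∧
        ∀ p : ℝ, p ∈ Set.Ioo (0:ℝ) p₀ →
          ∀ (V : Type) [Fintype V] [DecidableEq V]
            (H : Finset (Finset V)), (∀ e ∈ H, e.card = d) →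
            ∃ H' ⊆ H, branching V H' (c / p) ∧ c' * hitp V p H ≤ hitp V p H' := by
  intro c hc d
  set c₀ := min c (2 ^ d)⁻¹
  have hc₀ : 0 < c₀ := by positivity
  have hc₀d : 2 ^ d * c₀ ≤ 1 :=
    (mul_le_mul_of_nonneg_left (min_le_right _ _) (by positivity)).trans_eq
      (mul_inv_cancel₀ (by positivity))
  refine ⟨c₀ / 2, by positivity, (1 + 2 ^ (d + 2) / c₀ ^ d)⁻¹, by positivity, ?_⟩
  rintro p ⟨hp0, hp⟩ V _ _ H hd
  have hK : 2 ≤ c₀ / p := by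
    rw [le_div_iff₀ hp0]
    linarith
  obtain ⟨H', hsub, hbr, hhit⟩ := exists_branching_subset_hitp_le hp0 hc₀d hK H hd
  refine ⟨H', hsub, hbr.mono (by positivity) (by gcongr; exact min_le_left _ _), ?_⟩
  rwa [inv_mul_le_iff₀ (by positivity)]
end

section
/- Let n ≥ 2k − t and k ≥ t ≥ 1 be positive integers, Σ a finite alphabet, and let {f_S : S → Σ | S ∈ binom([n],k)} satisfy Pr_{(S₁,S₂)∼ν_{n,k,t}}[f_{S₁}|_{S₁∩S₂} ≠ f_{S₂}|_{S₁∩S₂}] ≤ ε. For a (t−1)-element subset T of [n], define ε_T(∅) := Pr[f_{S₁}|_T ≠ f_{S₂}|_T] where (S₁,S₂)∼ν_{n,k,t} conditioned on S₁∩S₂ ⊇ T, and for i ∈ [n]∖T define ε_T(i) := Pr[f_{S₁}|_T = f_{S₂}|_T and f_{S₁}(i) ≠ f_{S₂}(i)] where (S₁,S₂)∼ν_{n,k,t} conditioned on S₁∩S₂ = T∪{i}. Then E_T[ε_T(∅)] ≤ ε and E_{T, i∉T}[ε_T(i)] ≤ ε/t, where T is uniform among (t−1)-element subsets of [n] and,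 given T, i is uniform in [n]∖T. -/
open Finset

/-- The support of `ν_{n,k,t}`: ordered pairs of `k`-element subsets of `[n]`
with intersection of size exactly `t` (the distribution is uniform on this set). -/
def nupairs (n k t : ℕ) : Finset (Finset (Fin n) × Finset (Fin n)) :=
  ((ksets n k) ×ˢ (ksets n k)).filter (fun P => (P.1 ∩ P.2).card = t)

/-- `ε_T(∅)`: probability that `f_{S₁}|_T ≠ f_{S₂}|_T`, over `(S₁,S₂) ∼ ν_{n,k,t}`
conditioned on `S₁ ∩ S₂ ⊇ T`. -/
noncomputable def epsT (n k t : ℕ) (Γ : Type) [DecidableEq Γ]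
    (f : Finset (Fin n) → Fin n → Γ) (T : Finset (Fin n)) : ℝ :=
  (((nupairs n k t).filter
      (fun P => T ⊆ P.1 ∩ P.2 ∧ ¬ ∀ x ∈ T, f P.1 x = f P.2 x)).card : ℝ) /
  (((nupairs n k t).filter (fun P => T ⊆ P.1 ∩ P.2)).card : ℝ)

/-- `ε_T(i)`: probability that `f_{S₁}|_T = f_{S₂}|_T` but `f_{S₁}(i) ≠ f_{S₂}(i)`,
over `(S₁,S₂) ∼ ν_{n,k,t}` conditioned on `S₁ ∩ S₂ = T ∪ {i}`. -/
noncomputable def epsTi (n k t : ℕ) (Γ : Type) [DecidableEq Γ]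
    (f : Finset (Fin n) → Fin n → Γ) (T : Finset (Fin n)) (i : Fin n) : ℝ :=
  (((nupairs n k t).filter
      (fun P => P.1 ∩ P.2 = insert i T ∧ (∀ x ∈ T, f P.1 x = f P.2 x) ∧
                f P.1 i ≠ f P.2 i)).card : ℝ) /
  (((nupairs n k t).filter (fun P => P.1 ∩ P.2 = insert i T)).card : ℝ)

/- ### Auxiliary lemmas -/

lemma mem_ksets {n k : ℕ} {S : Finset (Fin n)} : S ∈ ksets n k ↔ S.card = k := by
  simp [ksets, Finset.mem_powersetCard]

lemma mem_nupairs {n k t : ℕ} {P : Finset (Fin n) × Finset (Fin n)} :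
    P ∈ nupairs n k t ↔ P.1.card = k ∧ P.2.card = k ∧ (P.1 ∩ P.2).card = t := by
  simp [nupairs, mem_ksets, and_assoc]

lemma map_symm_map {n : ℕ} (σ : Equiv.Perm (Fin n)) (s : Finset (Fin n)) :
    (s.map σ.toEmbedding).map σ.symm.toEmbedding = s := by
  ext x; simp [Finset.mem_map]

lemma map_map_symm {n : ℕ} (σ : Equiv.Perm (Fin n)) (s : Finset (Fin n)) :
    (s.map σ.symm.toEmbedding).map σ.toEmbedding = s := by
  ext x; simp [Finset.mem_map]

/-- permutation symmetry of `nupairs` counts -/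
lemma perm_card (n k t : ℕ) (σ : Equiv.Perm (Fin n))
    (p q : Finset (Fin n) → Prop) [DecidablePred p] [DecidablePred q]
    (h : ∀ I : Finset (Fin n), p I ↔ q (I.map σ.toEmbedding)) :
    ((nupairs n k t).filter (fun P => p (P.1 ∩ P.2))).card =
    ((nupairs n k t).filter (fun P => q (P.1 ∩ P.2))).card := by
  refine Finset.card_bij' (fun P _ => (P.1.map σ.toEmbedding, P.2.map σ.toEmbedding))
    (fun P _ => (P.1.map σ.symm.toEmbedding, P.2.map σ.symm.toEmbedding)) ?_ ?_ ?_ ?_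
  · intro P hP
    simp only [mem_filter, mem_nupairs] at hP ⊢
    obtain ⟨⟨h1, h2, h3⟩, h4⟩ := hP
    rw [← Finset.map_inter]
    simp only [Finset.card_map]
    exact ⟨⟨h1, h2, h3⟩, (h _).mp h4⟩
  · intro P hP
    simp only [mem_filter, mem_nupairs] at hP ⊢
    obtain ⟨⟨h1, h2, h3⟩, h4⟩ := hP
    rw [← Finset.map_inter]
    simp only [Finset.card_map]
    refine ⟨⟨h1, h2, h3⟩, ?_⟩
    rw [h, map_map_symm]
    exact h4
  · intro P hP
    simp [map_symm_map]
  · intro P hP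
    simp [map_map_symm]

/-- a permutation mapping A to B -/
lemma exists_perm_map {n : ℕ} (A B : Finset (Fin n)) (h : A.card = B.card) :
    ∃ σ : Equiv.Perm (Fin n), A.map σ.toEmbedding = B := by
  have hc : Fintype.card {x // x ∈ A} = Fintype.card {x // x ∈ B} := by
    simpa [Fintype.card_coe] using h
  let e : {x : Fin n // x ∈ A} ≃ {x : Fin n // x ∈ B} := Fintype.equivOfCardEq hc
  refine ⟨e.extendSubtype, ?_⟩
  apply Finset.eq_of_subset_of_card_le
  · intro x hx
    simp only [Finset.mem_map] at hx
    obtain ⟨a, ha, rfl⟩ := hx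
    exact e.extendSubtype_mem a ha
  · simp [h]

lemma denom1_const {n k t : ℕ} {T T' : Finset (Fin n)} (h : T.card = T'.card) :
    ((nupairs n k t).filter (fun P => T ⊆ P.1 ∩ P.2)).card =
    ((nupairs n k t).filter (fun P => T' ⊆ P.1 ∩ P.2)).card := by
  obtain ⟨σ, hσ⟩ := exists_perm_map T T' h
  refine perm_card n k t σ (fun I => T ⊆ I) (fun I => T' ⊆ I) (fun I => ?_)
  simp only [← hσ]
  exact Finset.map_subset_map.symm

lemma denom2_const {n k t : ℕ} {U U' : Finset (Fin n)} (h : U.card = U'.card) :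
    ((nupairs n k t).filter (fun P => P.1 ∩ P.2 = U)).card =
    ((nupairs n k t).filter (fun P => P.1 ∩ P.2 = U')).card := by
  obtain ⟨σ, hσ⟩ := exists_perm_map U U' h
  refine perm_card n k t σ (fun I => I = U) (fun I => I = U') (fun I => ?_)
  simp only [← hσ]
  constructor
  · rintro rfl; rfl
  · exact fun hh => Finset.map_injective σ.toEmbedding hh

lemma nupairs_nonempty {n k t : ℕ} (ht : 1 ≤ t) (htk : t ≤ k) (hn : 2*k ≤ n + t) :
    (nupairs n k t).Nonempty := by
  have h1 : ∀ m ∈ Finset.range k, m < n := by intro m hm; simp at hm; omega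
  have h2 : ∀ m ∈ (Finset.range t ∪ Finset.Ico k (2*k - t)), m < n := by
    intro m hm; simp [Finset.mem_union, Finset.mem_Ico] at hm; omega
  refine ⟨((Finset.range k).attachFin h1,
    ((Finset.range t ∪ Finset.Ico k (2*k - t))).attachFin h2), ?_⟩
  rw [mem_nupairs]
  have hdis : Disjoint (Finset.range t) (Finset.Ico k (2*k - t)) := by
    rw [Finset.disjoint_left]; intro a ha hb; simp at ha; simp [Finset.mem_Ico] at hb; omega
  have hint : (Finset.range k).attachFin h1 ∩
      ((Finset.range t ∪ Finset.Ico k (2*k - t))).attachFin h2 =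
      (Finset.range t).attachFin (by intro m hm; simp at hm; omega) := by
    ext x
    simp only [Finset.mem_inter, Finset.mem_attachFin, Finset.mem_range, Finset.mem_union,
      Finset.mem_Ico]
    omega
  refine ⟨by simp, ?_, ?_⟩
  · rw [Finset.card_attachFin, Finset.card_union_of_disjoint hdis]
    simp [Nat.card_Ico]; omega
  · rw [hint, Finset.card_attachFin, Finset.card_range]

lemma choose_t (t : ℕ) (ht : 1 ≤ t) : t.choose (t-1) = t := by
  obtain ⟨s, rfl⟩ : ∃ s, t = s + 1 := ⟨t - 1, by omega⟩
  simp [Nat.choose_succ_self_right]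

lemma filter_sub_eq {n t : ℕ} (I : Finset (Fin n)) (hI : I.card = t) (ht : 1 ≤ t) :
    ((ksets n (t-1)).filter (fun T => T ⊆ I)).card = t := by
  have : (ksets n (t-1)).filter (fun T => T ⊆ I) = I.powersetCard (t-1) := by
    ext T
    simp [mem_ksets, Finset.mem_powersetCard, and_comm]
  rw [this, Finset.card_powersetCard, hI, choose_t t ht]

lemma sum_denom1 (n k t : ℕ) (ht : 1 ≤ t) :
    ∑ T ∈ ksets n (t-1), ((nupairs n k t).filter (fun P => T ⊆ P.1 ∩ P.2)).card =
      t * (nupairs n k t).card := by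
  simp only [Finset.card_filter]
  rw [Finset.sum_comm]
  calc ∑ P ∈ nupairs n k t, ∑ T ∈ ksets n (t-1), (if T ⊆ P.1 ∩ P.2 then 1 else 0)
      = ∑ P ∈ nupairs n k t, t := Finset.sum_congr rfl (fun P hP => by
        rw [← Finset.card_filter]
        exact filter_sub_eq _ ((mem_nupairs.mp hP).2.2) ht)
    _ = t * (nupairs n k t).card := by rw [Finset.sum_const, smul_eq_mul, mul_comm]

lemma sum_denom2 (n k t : ℕ) :
    ∑ U ∈ ksets n t, ((nupairs n k t).filter (fun P => P.1 ∩ P.2 = U)).card =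
      (nupairs n k t).card := by
  exact (Finset.card_eq_sum_card_fiberwise
    (fun P hP => mem_ksets.mpr (mem_nupairs.mp hP).2.2)).symm

section numer
variable {n k t : ℕ} {Γ : Type} [DecidableEq Γ] (f : Finset (Fin n) → Fin n → Γ)

lemma sum_numer1 (ht : 1 ≤ t) :
    ∑ T ∈ ksets n (t-1), ((nupairs n k t).filter
        (fun P => T ⊆ P.1 ∩ P.2 ∧ ¬ ∀ x ∈ T, f P.1 x = f P.2 x)).card ≤
      t * ((nupairs n k t).filter
        (fun P => ¬ ∀ x ∈ P.1 ∩ P.2, f P.1 x = f P.2 x)).card := by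
  simp only [Finset.card_filter]
  rw [Finset.sum_comm]
  calc ∑ P ∈ nupairs n k t, ∑ T ∈ ksets n (t-1),
        (if T ⊆ P.1 ∩ P.2 ∧ ¬ ∀ x ∈ T, f P.1 x = f P.2 x then 1 else 0)
      ≤ ∑ P ∈ nupairs n k t,
        t * (if ¬ ∀ x ∈ P.1 ∩ P.2, f P.1 x = f P.2 x then 1 else 0) := by
        apply Finset.sum_le_sum
        intro P hP
        rw [← Finset.card_filter]
        by_cases hb : ∀ x ∈ P.1 ∩ P.2, f P.1 x = f P.2 x
        · rw [if_neg (not_not_intro hb), mul_zero, Nat.le_zero, Finset.card_eq_zero]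
          rw [Finset.filter_eq_empty_iff]
          rintro T _ ⟨hsub, hbad⟩
          exact hbad (fun x hx => hb x (hsub hx))
        · simp only [hb, if_pos, mul_one, not_false_eq_true]
          calc ((ksets n (t-1)).filter
              (fun T => T ⊆ P.1 ∩ P.2 ∧ ¬ ∀ x ∈ T, f P.1 x = f P.2 x)).card
              ≤ ((ksets n (t-1)).filter (fun T => T ⊆ P.1 ∩ P.2)).card := by
                apply Finset.card_le_card
                intro T hT
                simp only [Finset.mem_filter] at hT ⊢
                exact ⟨hT.1, hT.2.1⟩
            _ = t := filter_sub_eq _ ((mem_nupairs.mp hP).2.2) ht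
    _ = t * ∑ P ∈ nupairs n k t,
          (if ¬ ∀ x ∈ P.1 ∩ P.2, f P.1 x = f P.2 x then 1 else 0) := by
        rw [Finset.mul_sum]

lemma sum_numer2 :
    ∑ T ∈ ksets n (t-1), ∑ i ∈ Tᶜ, ((nupairs n k t).filter
        (fun P => P.1 ∩ P.2 = insert i T ∧ (∀ x ∈ T, f P.1 x = f P.2 x) ∧
                  f P.1 i ≠ f P.2 i)).card ≤
      ((nupairs n k t).filter (fun P => ¬ ∀ x ∈ P.1 ∩ P.2, f P.1 x = f P.2 x)).card := by
  simp only [Finset.card_filter]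
  rw [Finset.sum_congr rfl (fun T (_ : T ∈ ksets n (t-1)) => Finset.sum_comm), Finset.sum_comm]
  apply Finset.sum_le_sum
  intro P hP
  set c : Finset (Fin n) → Fin n → Prop := fun T i =>
    P.1 ∩ P.2 = insert i T ∧ (∀ x ∈ T, f P.1 x = f P.2 x) ∧ f P.1 i ≠ f P.2 i with hc
  show ∑ T ∈ ksets n (t-1), ∑ i ∈ Tᶜ, (if c T i then 1 else 0) ≤ _
  by_cases hex : ∃ T₀, ∃ i₀ ∈ T₀ᶜ, c T₀ i₀
  · obtain ⟨T₀, i₀, hi₀, hc₀⟩ := hex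
    have hi₀T : i₀ ∉ T₀ := by simpa using hi₀
    have hbad : ¬ ∀ x ∈ P.1 ∩ P.2, f P.1 x = f P.2 x := by
      intro hall
      exact hc₀.2.2 (hall i₀ (by rw [hc₀.1]; exact Finset.mem_insert_self _ _))
    have huniq : ∀ T, ∀ i ∈ Tᶜ, c T i → T = T₀ ∧ i = i₀ := by
      intro T i hiT hcTi
      have hiT' : i ∉ T := by simpa using hiT
      have hii : i = i₀ := by
        have hmem : i ∈ insert i₀ T₀ := by
          rw [← hc₀.1, hcTi.1]; exact Finset.mem_insert_self _ _
        rcases Finset.mem_insert.mp hmem with h | h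
        · exact h
        · exact absurd (hc₀.2.1 i h) hcTi.2.2
      refine ⟨?_, hii⟩
      have : T = (P.1 ∩ P.2).erase i := by
        rw [hcTi.1, Finset.erase_insert hiT']
      rw [this, hii, hc₀.1, Finset.erase_insert hi₀T]
    rw [if_pos hbad]
    calc ∑ T ∈ ksets n (t-1), ∑ i ∈ Tᶜ, (if c T i then 1 else 0)
        ≤ ∑ T ∈ ksets n (t-1), ∑ i ∈ Tᶜ, (if T = T₀ ∧ i = i₀ then 1 else 0) := by
          apply Finset.sum_le_sum; intro T _
          apply Finset.sum_le_sum; intro i hi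
          by_cases h : c T i
          · rw [if_pos h, if_pos (huniq T i hi h)]
          · rw [if_neg h]; positivity
      _ ≤ ∑ T ∈ ksets n (t-1), (if T = T₀ then 1 else 0) := by
          apply Finset.sum_le_sum; intro T _
          by_cases hT : T = T₀
          · subst hT
            simp only [true_and, Finset.sum_ite_eq' Tᶜ i₀ (fun _ => 1), if_pos rfl]
            split <;> simp
          · simp [hT]
      _ ≤ 1 := by
          rw [Finset.sum_ite_eq' (ksets n (t-1)) T₀ (fun _ => 1)]
          split <;> simp
  · push_neg at hex
    have : ∀ T ∈ ksets n (t-1), ∑ i ∈ Tᶜ, (if c T i then 1 else 0) = 0 := by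
      intro T _
      apply Finset.sum_eq_zero
      intro i hi
      rw [if_neg (hex T i hi)]
    rw [Finset.sum_congr rfl this]
    simp

end numer

/-- Bounding `ε_T(∅)` and `ε_T(i)` on average:
`E_T[ε_T(∅)] ≤ ε` and `E_{T, i ∉ T}[ε_T(i)] ≤ ε/t`, where `T` is a uniform
`(t-1)`-element subset of `[n]` and `i` is uniform in `[n] ∖ T`.
Expectations are written with denominators cleared: the number of `(t-1)`-sets is
`(ksets n (t-1)).card` and for each `T` the number of choices of `i` is `n-(t-1)`. -/
theorem stmt5 :
    ∀ (n k t : ℕ), 1 ≤ t → t ≤ k → 2 * k ≤ n + t →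
      ∀ (Γ : Type) [Fintype Γ] [DecidableEq Γ]
        (f : Finset (Fin n) → Fin n → Γ) (ε : ℝ),
        (((nupairs n k t).filter
            (fun P => ¬ ∀ x ∈ P.1 ∩ P.2, f P.1 x = f P.2 x)).card : ℝ) ≤
          ε * ((nupairs n k t).card : ℝ) →
        (∑ T ∈ ksets n (t-1), epsT n k t Γ f T) ≤ ε * ((ksets n (t-1)).card : ℝ) ∧
        (∑ T ∈ ksets n (t-1), ∑ i ∈ Tᶜ, epsTi n k t Γ f T i) ≤
          (ε / (t : ℝ)) * ((ksets n (t-1)).card : ℝ) * ((n - (t-1) : ℕ) : ℝ) := by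
  intro n k t ht htk hn Γ _ _ f ε hB
  have hkn : k ≤ n := by omega
  have hNpos : 0 < (nupairs n k t).card :=
    Finset.card_pos.mpr (nupairs_nonempty ht htk hn)
  have hε : 0 ≤ ε := by
    have h0 : (0:ℝ) ≤ (((nupairs n k t).filter
        (fun P => ¬ ∀ x ∈ P.1 ∩ P.2, f P.1 x = f P.2 x)).card : ℝ) := Nat.cast_nonneg _
    have hN : (0:ℝ) < ((nupairs n k t).card : ℝ) := by exact_mod_cast hNpos
    nlinarith
  -- notation
  set B := ((nupairs n k t).filter
      (fun P => ¬ ∀ x ∈ P.1 ∩ P.2, f P.1 x = f P.2 x)).card with hBdef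
  -- part 1
  obtain ⟨T₀, hT₀⟩ : (ksets n (t-1)).Nonempty := by
    rw [ksets, Finset.powersetCard_nonempty]
    simp; omega
  have hT₀c : T₀.card = t - 1 := mem_ksets.mp hT₀
  set D := ((nupairs n k t).filter (fun P => T₀ ⊆ P.1 ∩ P.2)).card with hDdef
  have hDconst : ∀ T ∈ ksets n (t-1),
      ((nupairs n k t).filter (fun P => T ⊆ P.1 ∩ P.2)).card = D :=
    fun T hT => denom1_const ((mem_ksets.mp hT).trans hT₀c.symm)
  have hsumD : (ksets n (t-1)).card * D = t * (nupairs n k t).card := by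
    rw [← sum_denom1 n k t ht, Finset.sum_congr rfl hDconst, Finset.sum_const, smul_eq_mul]
  have hDpos : 0 < D := by
    rcases Nat.eq_zero_or_pos D with h0 | h; swap
    · exact h
    rw [h0, mul_zero] at hsumD
    rcases Nat.mul_eq_zero.mp hsumD.symm with h | h <;> omega
  have part1 : (∑ T ∈ ksets n (t-1), epsT n k t Γ f T) ≤ ε * ((ksets n (t-1)).card : ℝ) := by
    have hsum : (∑ T ∈ ksets n (t-1), epsT n k t Γ f T) =
        ((∑ T ∈ ksets n (t-1), ((nupairs n k t).filter
          (fun P => T ⊆ P.1 ∩ P.2 ∧ ¬ ∀ x ∈ T, f P.1 x = f P.2 x)).card : ℕ) : ℝ) / (D : ℝ) := by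
      rw [Nat.cast_sum, Finset.sum_div]
      refine Finset.sum_congr rfl (fun T hT => ?_)
      simp only [epsT]
      rw [hDconst T hT]
    rw [hsum, div_le_iff₀ (by exact_mod_cast hDpos)]
    have h1 : ((∑ T ∈ ksets n (t-1), ((nupairs n k t).filter
        (fun P => T ⊆ P.1 ∩ P.2 ∧ ¬ ∀ x ∈ T, f P.1 x = f P.2 x)).card : ℕ) : ℝ) ≤
        (t : ℝ) * (B : ℝ) := by exact_mod_cast sum_numer1 f ht
    have h2 : (t : ℝ) * (B : ℝ) ≤ (t : ℝ) * (ε * ((nupairs n k t).card : ℝ)) :=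
      mul_le_mul_of_nonneg_left hB (by positivity)
    have h3 : ((ksets n (t-1)).card : ℝ) * (D:ℝ) = (t:ℝ) * ((nupairs n k t).card : ℝ) := by
      exact_mod_cast hsumD
    calc _ ≤ (t : ℝ) * (B : ℝ) := h1
      _ ≤ (t : ℝ) * (ε * ((nupairs n k t).card : ℝ)) := h2
      _ = ε * (((ksets n (t-1)).card : ℝ) * (D:ℝ)) := by rw [h3]; ring
      _ = ε * ((ksets n (t-1)).card : ℝ) * (D:ℝ) := by ring
  -- part 2
  obtain ⟨U₀, hU₀⟩ : (ksets n t).Nonempty := by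
    rw [ksets, Finset.powersetCard_nonempty]
    simp; omega
  have hU₀c : U₀.card = t := mem_ksets.mp hU₀
  set D' := ((nupairs n k t).filter (fun P => P.1 ∩ P.2 = U₀)).card with hD'def
  have hD'const : ∀ U : Finset (Fin n), U.card = t →
      ((nupairs n k t).filter (fun P => P.1 ∩ P.2 = U)).card = D' :=
    fun U hU => denom2_const (hU.trans hU₀c.symm)
  have hsumD' : (ksets n t).card * D' = (nupairs n k t).card := by
    rw [← sum_denom2 n k t,
      Finset.sum_congr rfl (fun U hU => hD'const U (mem_ksets.mp hU)),
      Finset.sum_const, smul_eq_mul]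
  have hD'pos : 0 < D' := by
    rcases Nat.eq_zero_or_pos D' with h0 | h; swap
    · exact h
    rw [h0, mul_zero] at hsumD'
    omega
  have hinsert : ∀ T ∈ ksets n (t-1), ∀ i ∈ Tᶜ, (insert i T).card = t := by
    intro T hT i hi
    rw [Finset.card_insert_of_notMem (by simpa using hi), mem_ksets.mp hT]
    omega
  have part2 : (∑ T ∈ ksets n (t-1), ∑ i ∈ Tᶜ, epsTi n k t Γ f T i) ≤
      (ε / (t : ℝ)) * ((ksets n (t-1)).card : ℝ) * ((n - (t-1) : ℕ) : ℝ) := by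
    have hsum : (∑ T ∈ ksets n (t-1), ∑ i ∈ Tᶜ, epsTi n k t Γ f T i) =
        ((∑ T ∈ ksets n (t-1), ∑ i ∈ Tᶜ, ((nupairs n k t).filter
          (fun P => P.1 ∩ P.2 = insert i T ∧ (∀ x ∈ T, f P.1 x = f P.2 x) ∧
            f P.1 i ≠ f P.2 i)).card : ℕ) : ℝ) / (D' : ℝ) := by
      rw [Nat.cast_sum, Finset.sum_div]
      refine Finset.sum_congr rfl (fun T hT => ?_)
      rw [Nat.cast_sum, Finset.sum_div]
      refine Finset.sum_congr rfl (fun i hi => ?_)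
      simp only [epsTi]
      rw [hD'const _ (hinsert T hT i hi)]
    rw [hsum, div_le_iff₀ (by exact_mod_cast hD'pos)]
    have h1 : ((∑ T ∈ ksets n (t-1), ∑ i ∈ Tᶜ, ((nupairs n k t).filter
        (fun P => P.1 ∩ P.2 = insert i T ∧ (∀ x ∈ T, f P.1 x = f P.2 x) ∧
          f P.1 i ≠ f P.2 i)).card : ℕ) : ℝ) ≤ (B : ℝ) := by
      exact_mod_cast sum_numer2 f
    have hKc : (ksets n t).card = n.choose t := by
      simp [ksets, Finset.card_powersetCard]
    have hKc' : (ksets n (t-1)).card = n.choose (t-1) := by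
      simp [ksets, Finset.card_powersetCard]
    have hid : t * (ksets n t).card = (ksets n (t-1)).card * (n - (t-1)) := by
      rw [hKc, hKc']
      have h := Nat.choose_succ_right_eq n (t-1)
      rw [show t-1+1 = t from by omega] at h
      rw [mul_comm]
      exact h
    have hKK : ((ksets n (t-1)).card : ℝ) * ((n - (t-1) : ℕ) : ℝ) =
        (t : ℝ) * ((ksets n t).card : ℝ) := by exact_mod_cast hid.symm
    have ht0 : (t : ℝ) ≠ 0 := by
      have : (0:ℝ) < (t:ℝ) := by exact_mod_cast ht
      exact ne_of_gt this
    have hsumD'R : ((ksets n t).card : ℝ) * (D' : ℝ) = ((nupairs n k t).card : ℝ) := by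
      exact_mod_cast hsumD'
    have hfinal : ε / (t:ℝ) * ((ksets n (t-1)).card : ℝ) * ((n - (t-1) : ℕ) : ℝ) * (D' : ℝ) =
        ε * ((ksets n t).card : ℝ) * (D' : ℝ) := by
      calc ε / (t:ℝ) * ((ksets n (t-1)).card : ℝ) * ((n - (t-1) : ℕ) : ℝ) * (D' : ℝ)
          = ε / (t:ℝ) * (((ksets n (t-1)).card : ℝ) * ((n - (t-1) : ℕ) : ℝ)) * (D' : ℝ) := by
            ring
        _ = ε / (t:ℝ) * ((t : ℝ) * ((ksets n t).card : ℝ)) * (D' : ℝ) := by rw [hKK]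
        _ = ε * ((ksets n t).card : ℝ) * (D' : ℝ) := by field_simp
    rw [hfinal]
    calc ((∑ T ∈ ksets n (t-1), ∑ i ∈ Tᶜ, ((nupairs n k t).filter
        (fun P => P.1 ∩ P.2 = insert i T ∧ (∀ x ∈ T, f P.1 x = f P.2 x) ∧
          f P.1 i ≠ f P.2 i)).card : ℕ) : ℝ) ≤ (B : ℝ) := h1
      _ ≤ ε * ((nupairs n k t).card : ℝ) := hB
      _ = ε * (((ksets n t).card : ℝ) * (D' : ℝ)) := by rw [hsumD'R]
      _ = ε * ((ksets n t).card : ℝ) * (D' : ℝ) := by ring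
  exact ⟨part1, part2⟩
end

section
/- For every positive integer d and α ∈ (0,1) there is a constant K (depending only on d and α) such that the following holds. Let n ≥ 2k − t, k ≥ t ≥ max{αk, d} be positive integers, Σ a finite alphabet, and let {f_S : binom(S,≤d) → Σ | S ∈ binom([n],k)} satisfy Pr_{(S₁,S₂)∼ν_{n,k,t}}[f_{S₁} ≁ f_{S₂}] ≤ ε, where f_{S₁} ∼ f_{S₂} means f_{S₁}(A) = f_{S₂}(A) for all A ∈ binom(S₁∩S₂,≤d). Then for every integer 0 ≤ i ≤ d, when (S₁,S₂)∼ν_{n,k,t} and T is a uniform (t−d)-element subset of S₁∩S₂, Pr[ f_{S₁}|_{T,i−1} ∼ f_{S₂}|_{T,i−1} and f_{S₁} ≁ f_{S₂} ] ≤ K·k^{−i}·ε, where f_{S₁}|_{T,j} ∼ f_{S₂}|_{T,j} means f_{S₁}(A) = f_{S₂}(A) for all A ∈ binom(S₁∩S₂,≤d) with |A∖T| ≤ j. -/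
open Finset

/-- Triples `((S₁,S₂),T)` with `(S₁,S₂)` in the support of `ν_{n,k,t}` and `T` an
`m`-element subset of `S₁ ∩ S₂`.  Uniform sampling on this set is the same as drawing
`(S₁,S₂) ∼ ν_{n,k,t}` and then a uniform `m`-subset `T ⊆ S₁ ∩ S₂`, as the number of
such `T` is the same for every pair. -/
def triples (n k t m : ℕ) :
    Finset ((Finset (Fin n) × Finset (Fin n)) × Finset (Fin n)) :=
  ((nupairs n k t) ×ˢ (Finset.univ.powersetCard m)).filter
    (fun Q => Q.2 ⊆ Q.1.1 ∩ Q.1.2)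

/-!
A disagreeing pair `(S₁, S₂)` has a witness `A ⊆ S₁ ∩ S₂` with `|A| ≤ d`, and the event forces
`T` to miss at least `i` points of `A`. A uniform `(t - d)`-subset of the `t`-set `S₁ ∩ S₂` misses
`i` given points with probability `C(t-i, d-i) / C(t, d) = C(d, i) / C(t, i)`, and
`C(t, i) ≥ (t/i)^i ≥ (α k / i)^i`. A union bound over the `C(|A|, i)` choices of those points
bounds the probability of the event by `C(d, i)² (i/α)^i k^{-i}` times that of disagreement.
-/

theorem Nat.pow_le_pow_mul_choose {t i : ℕ} (hit : i ≤ t) : t ^ i ≤ i ^ i * t.choose i := by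
  have hprod : t ^ i * i.descFactorial i ≤ i ^ i * t.descFactorial i :=
    calc t ^ i * i.descFactorial i = ∏ j ∈ range i, t * (i - j) := by
          rw [Nat.descFactorial_eq_prod_range, prod_mul_distrib, prod_const, card_range]
      _ ≤ ∏ j ∈ range i, i * (t - j) := by
          refine prod_le_prod' fun j _ => ?_
          rw [Nat.mul_sub, Nat.mul_sub, Nat.mul_comm t i]
          exact Nat.sub_le_sub_left (Nat.mul_le_mul_right j hit) _
      _ = i ^ i * t.descFactorial i := by
          rw [Nat.descFactorial_eq_prod_range, prod_mul_distrib, prod_const, card_range]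
  rw [Nat.descFactorial_self, Nat.descFactorial_eq_factorial_mul_choose, Nat.mul_left_comm,
    Nat.mul_comm (t ^ i)] at hprod
  exact Nat.le_of_mul_le_mul_left hprod i.factorial_pos

theorem choose_mul_choose_mul_pow_le {α : ℝ} (hα : 0 < α) {d i t k : ℕ} (hid : i ≤ d)
    (hdt : d ≤ t) (hk : α * k ≤ t) :
    (d.choose i : ℝ) * (t - i).choose (t - d) * k ^ i
      ≤ (d.choose i : ℝ) ^ 2 * (i / α) ^ i * t.choose (t - d) := by
  have hsymm : (t - i).choose (t - d) = (t - i).choose (d - i) := by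
    rw [show t - d = (t - i) - (d - i) by omega, Nat.choose_symm (by omega)]
  have hmul : (t.choose d : ℝ) * d.choose i = t.choose i * (t - i).choose (d - i) := by
    exact_mod_cast Nat.choose_mul hid
  have hpow : (α * k) ^ i ≤ (i : ℝ) ^ i * t.choose i :=
    (pow_le_pow_left₀ (by positivity) hk i).trans
      (by exact_mod_cast Nat.pow_le_pow_mul_choose (hid.trans hdt))
  have hpos : 0 < (t.choose i : ℝ) * α ^ i :=
    mul_pos (by exact_mod_cast Nat.choose_pos (hid.trans hdt)) (pow_pos hα i)
  rw [hsymm, Nat.choose_symm hdt]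
  refine le_of_mul_le_mul_left ?_ hpos
  calc (t.choose i : ℝ) * α ^ i * (d.choose i * (t - i).choose (d - i) * k ^ i)
      = (d.choose i : ℝ) ^ 2 * t.choose d * (α * k) ^ i := by
        rw [mul_pow]; linear_combination (-(d.choose i : ℝ) * α ^ i * k ^ i) * hmul
    _ ≤ (d.choose i : ℝ) ^ 2 * t.choose d * (i ^ i * t.choose i) := by gcongr
    _ = t.choose i * α ^ i * ((d.choose i : ℝ) ^ 2 * (i / α) ^ i * t.choose d) := by
        rw [div_pow]; field_simp

theorem card_powersetCard_filter_le_card_sdiff {ι : Type*} [DecidableEq ι] {X A : Finset ι}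
    (hAX : A ⊆ X) (i m : ℕ) :
    #{T ∈ X.powersetCard m | i ≤ #(A \ T)} ≤ (#A).choose i * (#X - i).choose m := by
  have hcover : {T ∈ X.powersetCard m | i ≤ #(A \ T)}
      ⊆ (A.powersetCard i).biUnion fun B => (X \ B).powersetCard m := by
    intro T hT
    obtain ⟨hT, hi⟩ := mem_filter.1 hT
    obtain ⟨hTX, hTm⟩ := mem_powersetCard.1 hT
    obtain ⟨B, hB, hBi⟩ := exists_subset_card_eq hi
    refine mem_biUnion.2 ⟨B, mem_powersetCard.2 ⟨hB.trans sdiff_subset, hBi⟩,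
      mem_powersetCard.2 ⟨fun x hx => mem_sdiff.2 ⟨hTX hx, fun hxB => ?_⟩, hTm⟩⟩
    exact (mem_sdiff.1 (hB hxB)).2 hx
  calc #{T ∈ X.powersetCard m | i ≤ #(A \ T)}
      ≤ ∑ B ∈ A.powersetCard i, #((X \ B).powersetCard m) :=
        (card_le_card hcover).trans card_biUnion_le
    _ = ∑ _B ∈ A.powersetCard i, (#X - i).choose m := by
        refine sum_congr rfl fun B hB => ?_
        obtain ⟨hBA, hBi⟩ := mem_powersetCard.1 hB
        rw [card_powersetCard, card_sdiff_of_subset (hBA.trans hAX), hBi]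
    _ = (#A).choose i * (#X - i).choose m := by
        rw [sum_const, smul_eq_mul, card_powersetCard]

section Triples

variable {n k t m : ℕ}

theorem card_filter_triples
    (q : (Finset (Fin n) × Finset (Fin n)) × Finset (Fin n) → Prop) [DecidablePred q] :
    #{Q ∈ triples n k t m | q Q}
      = ∑ P ∈ nupairs n k t, #{T ∈ (P.1 ∩ P.2).powersetCard m | q (P, T)} := by
  rw [triples, filter_filter, card_filter, sum_product]
  refine sum_congr rfl fun P _ => ?_
  rw [← card_filter]
  congr 1
  ext T
  simp only [mem_filter, mem_powersetCard, subset_univ, true_and]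
  tauto

theorem card_triples : #(triples n k t m) = #(nupairs n k t) * t.choose m := by
  have h := card_filter_triples (n := n) (k := k) (t := t) (m := m) fun _ => True
  simp only [filter_true, card_powersetCard] at h
  rw [h, sum_const_nat fun P hP => by rw [(mem_filter.1 hP).2]]

theorem card_filter_triples_le
    {p : Finset (Fin n) × Finset (Fin n) → Prop} [DecidablePred p]
    {q : (Finset (Fin n) × Finset (Fin n)) × Finset (Fin n) → Prop} [DecidablePred q]
    {c : ℕ} (hqp : ∀ P T, q (P, T) → p P)
    (hc : ∀ P ∈ nupairs n k t, p P → #{T ∈ (P.1 ∩ P.2).powersetCard m | q (P, T)} ≤ c) :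
    #{Q ∈ triples n k t m | q Q} ≤ #{P ∈ nupairs n k t | p P} * c := by
  rw [card_filter_triples, ← sum_filter_of_ne (p := p) fun P _ hP => ?_]
  · rw [← smul_eq_mul]
    exact sum_le_card_nsmul _ _ _ fun P hP => hc P (mem_filter.1 hP).1 (mem_filter.1 hP).2
  · obtain ⟨T, hT⟩ := card_ne_zero.1 hP
    exact hqp P T (mem_filter.1 hT).2

end Triples

theorem card_filter_triples_disagree_le {n k t d i m : ℕ} {Γ : Type*} [DecidableEq Γ]
    (f : Finset (Fin n) → Finset (Fin n) → Γ) :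
    #{Q ∈ triples n k t m | (∀ A ⊆ Q.1.1 ∩ Q.1.2, A.card ≤ d → (A \ Q.2).card < i →
                              f Q.1.1 A = f Q.1.2 A) ∧
                            ¬ ∀ A ⊆ Q.1.1 ∩ Q.1.2, A.card ≤ d → f Q.1.1 A = f Q.1.2 A}
      ≤ #{P ∈ nupairs n k t | ¬ ∀ A ⊆ P.1 ∩ P.2, A.card ≤ d → f P.1 A = f P.2 A}
        * (d.choose i * (t - i).choose m) := by
  refine card_filter_triples_le (fun _ _ hQ => hQ.2) fun P hP hbad => ?_
  push Not at hbad
  obtain ⟨A, hAX, hAd, hAne⟩ := hbad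
  have hmiss : {T ∈ (P.1 ∩ P.2).powersetCard m | (∀ A ⊆ P.1 ∩ P.2, A.card ≤ d →
        (A \ T).card < i → f P.1 A = f P.2 A) ∧ ¬ ∀ A ⊆ P.1 ∩ P.2, A.card ≤ d → f P.1 A = f P.2 A}
      ⊆ {T ∈ (P.1 ∩ P.2).powersetCard m | i ≤ #(A \ T)} :=
    monotone_filter_right _ fun T _ hT => not_lt.1 fun hlt => hAne (hT.1 A hAX hAd hlt)
  calc _ ≤ _ := card_le_card hmiss
    _ ≤ (#A).choose i * (#(P.1 ∩ P.2) - i).choose m :=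
        card_powersetCard_filter_le_card_sdiff hAX i m
    _ ≤ d.choose i * (t - i).choose m := by
        rw [(mem_filter.1 hP).2]
        exact Nat.mul_le_mul_right _ (Nat.choose_le_choose i hAd)

noncomputable def agreementConstant (d : ℕ) (α : ℝ) : ℝ :=
  ∑ j ∈ range (d + 1), (d.choose j : ℝ) ^ 2 * (j / α) ^ j

/-- Step 1 of the high-dimensional agreement theorem:
`Pr[f_{S₁}|_{T,i-1} ∼ f_{S₂}|_{T,i-1} and f_{S₁} ≁ f_{S₂}] ≤ K·k^{-i}·ε`.
Here `f_{S₁}|_{T,i-1} ∼ f_{S₂}|_{T,i-1}` means `f_{S₁} A = f_{S₂} A` for all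
`A ⊆ S₁ ∩ S₂` with `|A| ≤ d` and `|A ∖ T| ≤ i-1` (i.e. `|A ∖ T| < i`), and
`f_{S₁} ∼ f_{S₂}` means agreement on all `A ⊆ S₁ ∩ S₂`, `|A| ≤ d`.
The bound is written with the factor `k^i` cleared to the left-hand side. -/
theorem stmt9 :
    ∀ (d : ℕ), 0 < d → ∀ α : ℝ, α ∈ Set.Ioo (0:ℝ) 1 →
      ∃ K : ℝ,
        ∀ (n k t : ℕ), t ≤ k → 2 * k ≤ n + t →
          α * (k : ℝ) ≤ (t : ℝ) → d ≤ t →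
          ∀ (Γ : Type) [Fintype Γ] [DecidableEq Γ]
            (f : Finset (Fin n) → Finset (Fin n) → Γ) (ε : ℝ),
            (((nupairs n k t).filter
                (fun P => ¬ ∀ A ⊆ P.1 ∩ P.2, A.card ≤ d → f P.1 A = f P.2 A)).card : ℝ) ≤
              ε * ((nupairs n k t).card : ℝ) →
            ∀ i : ℕ, i ≤ d →
              (((triples n k t (t-d)).filter
                  (fun Q => (∀ A ⊆ Q.1.1 ∩ Q.1.2, A.card ≤ d → (A \ Q.2).card < i →
                              f Q.1.1 A = f Q.1.2 A) ∧
                            ¬ ∀ A ⊆ Q.1.1 ∩ Q.1.2, A.card ≤ d →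
                              f Q.1.1 A = f Q.1.2 A)).card : ℝ) * (k : ℝ)^i ≤
                K * ε * ((triples n k t (t-d)).card : ℝ) := by
  intro d _ α hα
  refine ⟨agreementConstant d α, fun n k t _ _ hαk hdt Γ _ _ f ε hε i hid => ?_⟩
  have hevent : (_ : ℝ) ≤ _ := Nat.cast_le.2 <|
    card_filter_triples_disagree_le (k := k) (t := t) (d := d) (m := t - d) (i := i) f
  have hKi : (d.choose i : ℝ) ^ 2 * (i / α) ^ i ≤ agreementConstant d α :=
    single_le_sum (f := fun j => (d.choose j : ℝ) ^ 2 * (j / α) ^ j)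
      (fun j _ => by have := hα.1; positivity) (mem_range.2 (Nat.lt_succ_of_le hid))
  have hεN : 0 ≤ ε * #(nupairs n k t) := (Nat.cast_nonneg _).trans hε
  rw [card_triples]
  push_cast at hevent ⊢
  calc _ ≤ (#{P ∈ nupairs n k t | ¬ ∀ A ⊆ P.1 ∩ P.2, A.card ≤ d → f P.1 A = f P.2 A} : ℝ)
          * ((d.choose i : ℝ) * (t - i).choose (t - d) * k ^ i) := by
        rw [← mul_assoc]; gcongr
    _ ≤ (ε * #(nupairs n k t)) * ((d.choose i : ℝ) ^ 2 * (i / α) ^ i * t.choose (t - d)) :=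
        mul_le_mul hε (choose_mul_choose_mul_pow_le hα.1 hid hdt hαk) (by positivity) hεN
    _ ≤ (ε * #(nupairs n k t)) * (agreementConstant d α * t.choose (t - d)) := by gcongr
    _ = agreementConstant d α * ε * (#(nupairs n k t) * t.choose (t - d)) := by ring
end

section
/- Fix an integer d ≥ 1 and c > 0. There exist p₀ > 0 and a constant K (both depending only on c and d) such that the following holds for all integers n ≥ k ≥ 2d with k/n ≤ p₀. Let F be a d-uniform hypergraph on [n], and for each hyperedge A ∈ F let Y_A ⊆ X_A := {S ∈ binom([n],k) : S ⊇ A} satisfy |Y_A| ≥ c·|X_A|. Then Pr_{S∼ν_{n,k}}[ S ∈ ⋃_{A∈F} X_A ] ≤ K · Pr_{S∼ν_{n,k}}[ S ∈ ⋃_{A∈F} Y_A ]. -/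
/-!
Write `X_T` for the family of `k`-sets containing `T`. Its size `(n - |T|).choose (k - |T|)`
depends only on `|T|`, and is log-concave in `|T|`, so that
`|X_{A ∩ B}| |X_{A ∪ B}| ≤ |X_A| |X_B|`.

Pass through `F` greedily, keeping an edge `A` unless its total overlap `∑_B |X_{A ∪ B}|` with the
edges kept so far exceeds `c |X_A| / 2`. By Bonferroni, any `m` kept edges have `Y`-sets whose
union has size at least `m c |X_A| / 2`, which pays for the `X`-sets of the kept edges. A rejected
edge `A` has, by pigeonhole over `T = A ∩ B`, a proper subset `T` lying in many kept edges; by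
log-concavity the union of their `Y`-sets has density at least `c² / 2^(d+2)` in `X_T`. These
subsets form `t`-uniform hypergraphs with `t < d`, and induction on `d` bounds their `X`-sets.
-/

open Finset

section Greedy

variable {α β : Type*} (w : α → α → ℝ) (θ : ℝ)

noncomputable def greedy : List α → List α
  | [] => []
  | a :: l => if ((greedy l).map (w a)).sum ≤ θ then a :: greedy l else greedy l

def pairSum : List α → ℝ
  | [] => 0
  | a :: l => (l.map (w a)).sum + pairSum l

variable {w θ}

theorem greedy_sublist (l : List α) : (greedy w θ l).Sublist l := by
  induction l with
  | nil => exact List.Sublist.slnil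
  | cons a l ih =>
    rw [greedy]
    split
    · exact ih.cons_cons a
    · exact ih.cons a

theorem pairSum_le_of_sublist_greedy (hw : ∀ a b, 0 ≤ w a b) {l l' : List α}
    (h : l'.Sublist (greedy w θ l)) : pairSum w l' ≤ θ * l'.length := by
  induction l generalizing l' with
  | nil =>
    rw [List.sublist_nil.mp h]
    simp [pairSum]
  | cons a l ih =>
    rw [greedy] at h
    split at h
    case isFalse => exact ih h
    case isTrue hle =>
      rcases List.sublist_cons_iff.mp h with h | ⟨r, rfl, hr⟩
      · exact ih h
      have hsum : (r.map (w a)).sum ≤ ((greedy w θ l).map (w a)).sum :=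
        (hr.map (w a)).sum_le_sum fun _ hx => by
          obtain ⟨b, -, rfl⟩ := List.mem_map.mp hx
          exact hw a b
      rw [pairSum, List.length_cons, Nat.cast_succ]
      linarith [ih hr]

theorem lt_sum_of_mem_of_notMem_greedy (hw : ∀ a b, 0 ≤ w a b) {l : List α} {a : α}
    (ha : a ∈ l) (hag : a ∉ greedy w θ l) : θ < ((greedy w θ l).map (w a)).sum := by
  induction l with
  | nil => simp at ha
  | cons b l ih =>
    rw [greedy] at hag ⊢
    split at hag
    case isFalse hlt =>
      rw [if_neg hlt]
      rcases List.mem_cons.mp ha with rfl | ha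
      · exact lt_of_not_ge hlt
      · exact ih ha hag
    case isTrue hle =>
      rw [if_pos hle, List.map_cons, List.sum_cons]
      have hab : a ≠ b := fun h => hag (h ▸ List.mem_cons_self)
      have := ih ((List.mem_cons.mp ha).resolve_left hab) fun h => hag (List.mem_cons_of_mem b h)
      linarith [hw a b]

variable [DecidableEq α] [DecidableEq β]

theorem card_biUnion_toFinset_le (Z : α → Finset β) (l : List α) :
    #(l.toFinset.biUnion Z) ≤ (l.map fun a => #(Z a)).sum := by
  induction l with
  | nil => simp
  | cons a l ih =>
    rw [List.toFinset_cons, biUnion_insert, List.map_cons, List.sum_cons]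
    exact (card_union_le _ _).trans (Nat.add_le_add_left ih _)

theorem sum_card_sub_pairSum_le_card_biUnion {Y : α → Finset β} {l : List α}
    (hwY : ∀ a ∈ l, ∀ b ∈ l, (#(Y a ∩ Y b) : ℝ) ≤ w a b) :
    (l.map fun a => (#(Y a) : ℝ)).sum - pairSum w l ≤ #(l.toFinset.biUnion Y) := by
  induction l with
  | nil => simp [pairSum]
  | cons a l ih =>
    have hinter : (#(Y a ∩ l.toFinset.biUnion Y) : ℝ) ≤ (l.map (w a)).sum := by
      rw [inter_biUnion]
      refine (Nat.cast_le.mpr (card_biUnion_toFinset_le _ l)).trans ?_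
      rw [Nat.cast_list_sum, List.map_map]
      exact List.sum_le_sum fun b hb =>
        hwY a List.mem_cons_self b (List.mem_cons_of_mem a hb)
    have hunion := card_union_add_card_inter (Y a) (l.toFinset.biUnion Y)
    have ih := ih fun b hb c hc => hwY b (List.mem_cons_of_mem a hb) c (List.mem_cons_of_mem a hc)
    rw [List.toFinset_cons, biUnion_insert, List.map_cons, List.sum_cons, pairSum]
    have : (#(Y a ∪ l.toFinset.biUnion Y) : ℝ) + #(Y a ∩ l.toFinset.biUnion Y) =
        #(Y a) + #(l.toFinset.biUnion Y) := by exact_mod_cast hunion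
    linarith

theorem exists_greedy_subfamily (s : Finset α) (Y : α → Finset β) (hw : ∀ a b, 0 ≤ w a b)
    (hwY : ∀ a ∈ s, ∀ b ∈ s, (#(Y a ∩ Y b) : ℝ) ≤ w a b) {m : ℝ} (hm : ∀ a ∈ s, m ≤ #(Y a)) :
    ∃ g ⊆ s, (∀ t ⊆ g, (m - θ) * #t ≤ #(t.biUnion Y)) ∧
      ∀ a ∈ s, a ∉ g → θ < ∑ b ∈ g, w a b := by
  set l := greedy w θ s.toList
  have hls : l.Sublist s.toList := greedy_sublist _
  have hnodup : l.Nodup := hls.nodup s.nodup_toList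
  refine ⟨l.toFinset, fun a ha => mem_toList.mp (hls.subset (List.mem_toFinset.mp ha)), ?_, ?_⟩
  · intro t ht
    set l' := l.filter (· ∈ t)
    have hl's : ∀ a ∈ l', a ∈ s := fun a ha =>
      mem_toList.mp (hls.subset (List.mem_of_mem_filter ha))
    have hl't : l'.toFinset = t := by
      ext a
      simp only [l', List.mem_toFinset, List.mem_filter, decide_eq_true_eq]
      exact ⟨And.right, fun ha => ⟨List.mem_toFinset.mp (ht ha), ha⟩⟩
    have hlen : (#t : ℝ) = l'.length := by
      rw [← hl't, List.toFinset_card_of_nodup (hnodup.filter _)]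
    have hsum : l'.length • m ≤ (l'.map fun a => (#(Y a) : ℝ)).sum := by
      rw [← List.length_map (f := fun a => (#(Y a) : ℝ))]
      exact List.card_nsmul_le_sum _ _ fun x hx => by
        obtain ⟨a, ha, rfl⟩ := List.mem_map.mp hx
        exact hm a (hl's a ha)
    have hpair : pairSum w l' ≤ θ * l'.length :=
      pairSum_le_of_sublist_greedy hw List.filter_sublist
    have hbon := sum_card_sub_pairSum_le_card_biUnion (l := l') (Y := Y) fun a ha b hb =>
      hwY a (hl's a ha) b (hl's b hb)
    rw [nsmul_eq_mul] at hsum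
    rw [hlen, ← hl't]
    linarith
  · intro a ha hag
    rw [List.sum_toFinset _ hnodup]
    exact lt_sum_of_mem_of_notMem_greedy hw (mem_toList.mpr ha) (mt List.mem_toFinset.mpr hag)

end Greedy

theorem Nat.sub_mul_choose_sub_succ {n k j : ℕ} (hjk : j < k) (hkn : k ≤ n) :
    (n - j) * (n - (j + 1)).choose (k - (j + 1)) = (k - j) * (n - j).choose (k - j) := by
  obtain ⟨m, hm⟩ : ∃ m, n - j = m + 1 := ⟨n - j - 1, by omega⟩
  obtain ⟨r, hr⟩ : ∃ r, k - j = r + 1 := ⟨k - j - 1, by omega⟩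
  rw [show n - (j + 1) = m by omega, show k - (j + 1) = r by omega, hm, hr,
    Nat.add_one_mul_choose_eq, mul_comm]

-- The ratio `(k - j) / (n - j)` of consecutive terms of `j ↦ (n - j).choose (k - j)` decreases.
theorem Nat.choose_sub_mul_choose_sub_add_le {n k a b m : ℕ} (hab : a ≤ b) (hbm : b + m ≤ k)
    (hkn : k ≤ n) :
    (n - a).choose (k - a) * (n - (b + m)).choose (k - (b + m)) ≤
      (n - (a + m)).choose (k - (a + m)) * (n - b).choose (k - b) := by
  set C : ℕ → ℕ := fun j => (n - j).choose (k - j)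
  change C a * C (b + m) ≤ C (a + m) * C b
  induction m with
  | zero => simp
  | succ m ih =>
    have ih := ih (by omega)
    have hlt : b + m < k := by omega
    have hA : (n - (a + m)) * C (a + m + 1) = (k - (a + m)) * C (a + m) :=
      Nat.sub_mul_choose_sub_succ (by omega) hkn
    have hB : (n - (b + m)) * C (b + m + 1) = (k - (b + m)) * C (b + m) :=
      Nat.sub_mul_choose_sub_succ (by omega) hkn
    have hratio : (k - (b + m)) * (n - (a + m)) ≤ (k - (a + m)) * (n - (b + m)) := by
      obtain ⟨r, rfl⟩ := Nat.exists_eq_add_of_le hkn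
      rw [show k + r - (a + m) = (k - (a + m)) + r by omega,
        show k + r - (b + m) = (k - (b + m)) + r by omega]
      nlinarith [Nat.sub_le_sub_left (show a + m ≤ b + m by omega) k]
    refine le_of_mul_le_mul_right (a := (n - (b + m)) * (n - (a + m))) ?_
      (Nat.mul_pos (by omega : 0 < n - (b + m)) (by omega : 0 < n - (a + m)))
    calc C a * C (b + (m + 1)) * ((n - (b + m)) * (n - (a + m)))
        = (n - (a + m)) * C a * ((n - (b + m)) * C (b + m + 1)) := by rw [← add_assoc]; ring
      _ = (k - (b + m)) * (n - (a + m)) * (C a * C (b + m)) := by rw [hB]; ring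
      _ ≤ (k - (a + m)) * (n - (b + m)) * (C (a + m) * C b) := Nat.mul_le_mul hratio ih
      _ = (n - (b + m)) * C b * ((n - (a + m)) * C (a + m + 1)) := by rw [hA]; ring
      _ = C (a + (m + 1)) * C b * ((n - (b + m)) * (n - (a + m))) := by rw [← add_assoc]; ring

def ksetsAbove (n k : ℕ) (T : Finset (Fin n)) : Finset (Finset (Fin n)) :=
  (ksets n k).filter (T ⊆ ·)

section ksetsAbove

variable {n k : ℕ}

@[simp]
theorem mem_ksetsAbove {T S : Finset (Fin n)} : S ∈ ksetsAbove n k T ↔ #S = k ∧ T ⊆ S := by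
  simp [ksetsAbove, ksets]

theorem ksetsAbove_anti {T T' : Finset (Fin n)} (h : T ⊆ T') :
    ksetsAbove n k T' ⊆ ksetsAbove n k T :=
  monotone_filter_right _ fun _ _ hS => h.trans hS

theorem ksetsAbove_union (A B : Finset (Fin n)) :
    ksetsAbove n k (A ∪ B) = ksetsAbove n k A ∩ ksetsAbove n k B := by
  ext S
  simp only [mem_ksetsAbove, mem_inter, union_subset_iff]
  tauto

theorem card_ksetsAbove {T : Finset (Fin n)} (hT : #T ≤ k) :
    #(ksetsAbove n k T) = (n - #T).choose (k - #T) := by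
  rw [ksetsAbove, ksets, card_filter_powersetCard_subset _ _ _ (subset_univ T) hT, card_univ,
    Fintype.card_fin]

theorem card_ksetsAbove_inter_mul_card_ksetsAbove_union_le (hkn : k ≤ n)
    {A B : Finset (Fin n)} (hAB : #(A ∪ B) ≤ k) :
    #(ksetsAbove n k (A ∩ B)) * #(ksetsAbove n k (A ∪ B)) ≤
      #(ksetsAbove n k A) * #(ksetsAbove n k B) := by
  have hIA : #(A ∩ B) ≤ #A := card_le_card inter_subset_left
  have hIB : #(A ∩ B) ≤ #B := card_le_card inter_subset_right
  have hsum := card_union_add_card_inter A B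
  obtain ⟨m, hm⟩ := Nat.exists_eq_add_of_le hIA
  rw [card_ksetsAbove (by omega), card_ksetsAbove hAB, card_ksetsAbove (by omega),
    card_ksetsAbove (by omega), show #(A ∪ B) = #B + m by omega, hm]
  exact Nat.choose_sub_mul_choose_sub_add_le hIB (by omega) hkn

theorem filter_exists_subset_eq_biUnion (F : Finset (Finset (Fin n))) :
    (ksets n k).filter (fun S => ∃ A ∈ F, A ⊆ S) = F.biUnion (ksetsAbove n k) := by
  ext S
  simp only [mem_filter, mem_biUnion, ksetsAbove]
  exact ⟨fun ⟨hS, A, hA, hAS⟩ => ⟨A, hA, hS, hAS⟩, fun ⟨A, hA, hS, hAS⟩ => ⟨hS, A, hA, hAS⟩⟩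

theorem filter_exists_mem_eq_biUnion (F : Finset (Finset (Fin n)))
    (Y : Finset (Fin n) → Finset (Finset (Fin n))) (hY : ∀ A ∈ F, Y A ⊆ ksets n k) :
    (ksets n k).filter (fun S => ∃ A ∈ F, S ∈ Y A) = F.biUnion Y := by
  ext S
  simp only [mem_filter, mem_biUnion]
  exact ⟨And.right, fun ⟨A, hA, hS⟩ => ⟨hY A hA hS, A, hA, hS⟩⟩

end ksetsAbove

def linkUnion {α β : Type*} [DecidableEq α] [DecidableEq β] (G : Finset (Finset α))
    (Y : Finset α → Finset β) (T : Finset α) : Finset β :=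
  (G.filter (T ⊆ ·)).biUnion Y

noncomputable def denseLinks {n : ℕ} (k : ℕ) (G : Finset (Finset (Fin n)))
    (Y : Finset (Fin n) → Finset (Finset (Fin n))) (c : ℝ) (t : ℕ) : Finset (Finset (Fin n)) :=
  (powersetCard t univ).filter fun T => c * #(ksetsAbove n k T) ≤ #(linkUnion G Y T)

theorem exists_dense_link {n k d : ℕ} (hdk : 2 * d ≤ k) (hkn : k ≤ n) {c N : ℝ} (hc : 0 < c)
    (hN : 0 < N) {F G : Finset (Finset (Fin n))} {Y : Finset (Fin n) → Finset (Finset (Fin n))}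
    (hF : ∀ A ∈ F, #A = d) (hXF : ∀ A ∈ F, (#(ksetsAbove n k A) : ℝ) = N) (hGF : G ⊆ F)
    (hG : ∀ t ⊆ G, c * N / 2 * #t ≤ #(t.biUnion Y)) {A : Finset (Fin n)} (hA : A ∈ F)
    (hAG : A ∉ G) (hAheavy : c * N / 2 < ∑ B ∈ G, (#(ksetsAbove n k (A ∪ B)) : ℝ)) :
    ∃ T ⊂ A, T ∈ denseLinks k G Y (c ^ 2 / 2 ^ (d + 2)) #T := by
  set X := ksetsAbove n k
  obtain ⟨T, hTA, hT⟩ := exists_lt_sum_fiber_of_maps_to_of_nsmul_lt_sum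
    (fun B _ => mem_powerset.mpr inter_subset_left : ∀ B ∈ G, A ∩ B ∈ A.powerset)
    (w := fun B => (#(X (A ∪ B)) : ℝ)) (b := c * N / 2 ^ (d + 1)) <| by
      rwa [card_powerset, hF A hA, nsmul_eq_mul, Nat.cast_pow, Nat.cast_two, pow_succ,
        mul_div_assoc', mul_div_mul_left _ _ (by positivity)]
  set Φ := G.filter (fun B => A ∩ B = T)
  set Γ := G.filter (T ⊆ ·)
  have hΦ : ∀ B ∈ Φ, (#(X (A ∪ B)) : ℝ) * #(X T) ≤ N ^ 2 := by
    intro B hB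
    obtain ⟨hBG, rfl⟩ := mem_filter.mp hB
    have hAB : #(A ∪ B) ≤ k := (card_union_le A B).trans (by rw [hF A hA, hF B (hGF hBG)]; omega)
    calc (#(X (A ∪ B)) : ℝ) * #(X (A ∩ B)) = ((#(X (A ∩ B)) * #(X (A ∪ B)) : ℕ) : ℝ) := by
          push_cast; ring
      _ ≤ ((#(X A) * #(X B) : ℕ) : ℝ) := by
          exact_mod_cast card_ksetsAbove_inter_mul_card_ksetsAbove_union_le hkn hAB
      _ = N ^ 2 := by push_cast; rw [hXF A hA, hXF B (hGF hBG), sq]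
  have hTne : T ≠ A := by
    rintro rfl
    have hΦempty : Φ = ∅ := filter_eq_empty_iff.mpr fun B hBG hB =>
      hAG (eq_of_subset_of_card_le (inter_eq_left.mp hB)
        (by rw [hF _ hA, hF B (hGF hBG)]) ▸ hBG)
    rw [hΦempty, sum_empty] at hT
    exact absurd hT (not_lt.mpr (by positivity))
  refine ⟨T, ssubset_of_subset_of_ne (mem_powerset.mp hTA) hTne,
    mem_filter.mpr ⟨mem_powersetCard.mpr ⟨subset_univ _, rfl⟩, le_of_mul_le_mul_right ?_ hN⟩⟩
  calc c ^ 2 / 2 ^ (d + 2) * #(X T) * N = c / 2 * (c * N / 2 ^ (d + 1) * #(X T)) := by ring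
    _ ≤ c / 2 * ∑ B ∈ Φ, (#(X (A ∪ B)) : ℝ) * #(X T) := by
        rw [← sum_mul]; gcongr
    _ ≤ c / 2 * (#Φ * N ^ 2) := by
        gcongr; simpa only [nsmul_eq_mul] using sum_le_card_nsmul Φ _ _ hΦ
    _ ≤ c / 2 * (#Γ * N ^ 2) := by
        gcongr; exact monotone_filter_right _ fun B _ hB => hB ▸ inter_subset_right
    _ = c * N / 2 * #Γ * N := by ring
    _ ≤ #(linkUnion G Y T) * N := mul_le_mul_of_nonneg_right (hG Γ (filter_subset _ _)) hN.le

def PruningBound (d : ℕ) (c K : ℝ) : Prop :=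
  ∀ ⦃n k : ℕ⦄, 2 * d ≤ k → k ≤ n → ∀ F : Finset (Finset (Fin n)), (∀ A ∈ F, #A = d) →
    ∀ Y : Finset (Fin n) → Finset (Finset (Fin n)), (∀ A ∈ F, Y A ⊆ ksetsAbove n k A) →
      (∀ A ∈ F, c * #(ksetsAbove n k A) ≤ #(Y A)) →
      (#(F.biUnion (ksetsAbove n k)) : ℝ) ≤ K * #(F.biUnion Y)

theorem PruningBound.card_biUnion_denseLinks_le {t : ℕ} {c K : ℝ} (h : PruningBound t c K)
    (hK : 0 ≤ K) {n k : ℕ} (htk : 2 * t ≤ k) (hkn : k ≤ n) {G : Finset (Finset (Fin n))}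
    {Y : Finset (Fin n) → Finset (Finset (Fin n))} (hYX : ∀ B ∈ G, Y B ⊆ ksetsAbove n k B) :
    (#((denseLinks k G Y c t).biUnion (ksetsAbove n k)) : ℝ) ≤ K * #(G.biUnion Y) := by
  refine (h htk hkn _ (fun T hT => (mem_powersetCard.mp (mem_filter.mp hT).1).2) (linkUnion G Y)
    (fun T _ => biUnion_subset.mpr fun B hB => ?_) (fun T hT => (mem_filter.mp hT).2)).trans ?_
  · obtain ⟨hBG, hTB⟩ := mem_filter.mp hB
    exact (hYX B hBG).trans (ksetsAbove_anti hTB)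
  · refine mul_le_mul_of_nonneg_left (Nat.cast_le.mpr (card_le_card ?_)) hK
    exact biUnion_subset.mpr fun T _ => biUnion_subset_biUnion_of_subset_left Y (filter_subset _ _)

theorem PruningBound.of_lt {d : ℕ} {c : ℝ} (hc : 0 < c) {K : ℕ → ℝ} (hK0 : ∀ t, 0 ≤ K t)
    (hK : ∀ t < d, PruningBound t (c ^ 2 / 2 ^ (d + 2)) (K t)) :
    PruningBound d c (2 / c + ∑ t ∈ range d, K t) := by
  intro n k hdk hkn F hF Y hYX hYc
  set X := ksetsAbove n k
  set W := F.biUnion Y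
  set N : ℝ := (((n - d).choose (k - d) : ℕ) : ℝ)
  have hXF : ∀ A ∈ F, (#(X A) : ℝ) = N := fun A hA => by
    rw [card_ksetsAbove (by rw [hF A hA]; omega), hF A hA]
  have hN : 0 < N := Nat.cast_pos.mpr (Nat.choose_pos (by omega))
  obtain ⟨G, hGF, hG, hrej⟩ := exists_greedy_subfamily F Y (w := fun A B => #(X (A ∪ B)))
    (θ := c * N / 2) (fun _ _ => Nat.cast_nonneg _)
    (fun A hA B hB => Nat.cast_le.mpr <| card_le_card <| by
      simpa only [X, ksetsAbove_union] using inter_subset_inter (hYX A hA) (hYX B hB))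
    (m := c * N) fun A hA => hXF A hA ▸ hYc A hA
  rw [show c * N - c * N / 2 = c * N / 2 by ring] at hG
  set H := denseLinks k G Y (c ^ 2 / 2 ^ (d + 2))
  have hGW : (#(G.biUnion Y) : ℝ) ≤ #W :=
    Nat.cast_le.mpr (card_le_card (biUnion_subset_biUnion_of_subset_left Y hGF))
  have hGX : (#(G.biUnion X) : ℝ) ≤ 2 / c * #W := calc
    (#(G.biUnion X) : ℝ) ≤ ∑ A ∈ G, (#(X A) : ℝ) := by exact_mod_cast card_biUnion_le
    _ = 2 / c * (c * N / 2 * #G) := by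
        rw [sum_congr rfl fun A hA => hXF A (hGF hA), sum_const, nsmul_eq_mul]
        field_simp
    _ ≤ 2 / c * #W := by gcongr; exact (hG G Subset.rfl).trans hGW
  have hHX : ∀ t < d, (#((H t).biUnion X) : ℝ) ≤ K t * #W := fun t ht =>
    ((hK t ht).card_biUnion_denseLinks_le (hK0 t) (by omega) hkn fun B hB => hYX B (hGF hB)).trans
      (mul_le_mul_of_nonneg_left hGW (hK0 t))
  have hsplit : F.biUnion X ⊆ G.biUnion X ∪ (range d).biUnion fun t => (H t).biUnion X := by
    intro S hS
    obtain ⟨A, hA, hSA⟩ := mem_biUnion.mp hS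
    by_cases hAG : A ∈ G
    · exact mem_union_left _ (mem_biUnion.mpr ⟨A, hAG, hSA⟩)
    obtain ⟨T, hTA, hT⟩ := exists_dense_link hdk hkn hc hN hF hXF hGF hG hA hAG (hrej A hA hAG)
    refine mem_union_right _ (mem_biUnion.mpr ⟨#T, ?_, mem_biUnion.mpr ⟨T, hT, ?_⟩⟩)
    · exact mem_range.mpr (hF A hA ▸ card_lt_card hTA)
    · exact ksetsAbove_anti hTA.1 hSA
  calc (#(F.biUnion X) : ℝ) ≤ #(G.biUnion X) + ∑ t ∈ range d, (#((H t).biUnion X) : ℝ) := by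
        exact_mod_cast (card_le_card hsplit).trans <|
          (card_union_le _ _).trans (Nat.add_le_add_left card_biUnion_le _)
    _ ≤ 2 / c * #W + ∑ t ∈ range d, K t * #W :=
        add_le_add hGX (sum_le_sum fun t ht => hHX t (mem_range.mp ht))
    _ = (2 / c + ∑ t ∈ range d, K t) * #W := by rw [← sum_mul, add_mul]

theorem exists_pruningBound (d : ℕ) {c : ℝ} (hc : 0 < c) : ∃ K, 0 ≤ K ∧ PruningBound d c K := by
  induction d using Nat.strong_induction_on generalizing c with
  | _ d ih =>
  have hK : ∀ t, ∃ K, 0 ≤ K ∧ (t < d → PruningBound t (c ^ 2 / 2 ^ (d + 2)) K) := fun t =>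
    if ht : t < d then (ih t ht (by positivity)).imp fun _ hK => ⟨hK.1, fun _ => hK.2⟩
    else ⟨0, le_rfl, fun h => absurd h ht⟩
  choose K hK0 hK using hK
  exact ⟨_, add_nonneg (by positivity) (sum_nonneg fun t _ => hK0 t), .of_lt hc hK0 hK⟩

/-- Auxiliary lemma (consequence of the hypergraph pruning lemma): if `F` is a
`d`-uniform hypergraph on `[n]` and for each `A ∈ F` a subfamily
`Y A ⊆ X_A = {S ∈ binom([n],k) : S ⊇ A}` has density at least `c` in `X_A`, then
`Pr_{S∼ν_{n,k}}[S ∈ ⋃_A X_A] ≤ K · Pr_{S∼ν_{n,k}}[S ∈ ⋃_A Y_A]`. -/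
theorem stmt11 :
    ∀ (d : ℕ), 1 ≤ d → ∀ c : ℝ, 0 < c →
      ∃ p₀ : ℝ, 0 < p₀ ∧ ∃ K : ℝ,
        ∀ (n k : ℕ), 2 * d ≤ k → k ≤ n → (k : ℝ) / (n : ℝ) ≤ p₀ →
          ∀ (F : Finset (Finset (Fin n))), (∀ A ∈ F, A.card = d) →
            ∀ Y : Finset (Fin n) → Finset (Finset (Fin n)),
              (∀ A ∈ F, Y A ⊆ (ksets n k).filter (fun S => A ⊆ S)) →
              (∀ A ∈ F, c * (((ksets n k).filter (fun S => A ⊆ S)).card : ℝ) ≤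
                ((Y A).card : ℝ)) →
              (((ksets n k).filter (fun S => ∃ A ∈ F, A ⊆ S)).card : ℝ) ≤
                K * (((ksets n k).filter (fun S => ∃ A ∈ F, S ∈ Y A)).card : ℝ) := by
  intro d _ c hc
  obtain ⟨K, -, hK⟩ := exists_pruningBound d hc
  refine ⟨1, one_pos, K, fun n k hdk hkn _ F hF Y hYX hYc => ?_⟩
  rw [filter_exists_subset_eq_biUnion,
    filter_exists_mem_eq_biUnion F Y fun A hA => (hYX A hA).trans (filter_subset _ _)]
  exact hK hdk hkn F hF Y hYX hYc
end

section
/- For every positive integer d, every c > 0 and every p ∈ (0,1) the following holds. Let 1 ≤ r ≤ d, let H be a d-uniform hypergraph and I a (d−r)-uniform hypergraph on the same finite vertex set such that: (1) for every e ∈ I and every nonempty set A disjoint from e, the set e ∪ A has at most (c/p)^{r−|A|} extensions in H; and (2) I has branching factor c/p. Then the subhypergraph K ⊆ H consisting of all hyperedges of H that extend at least two distinct hyperedges of I has branching factor 2^{d+1}·c/p. -/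
open Finset

lemma branch_bound {V : Type} [DecidableEq V] (I : Finset (Finset V)) (ρ : ℝ)
    (hρ : 0 < ρ) (m : ℕ) (hIc : ∀ f ∈ I, f.card = m) (hI : branching V I ρ)
    (B : Finset V) :
    ((I.filter (fun f => B ⊆ f)).card : ℝ) ≤ ρ ^ ((m : ℤ) - B.card) := by
  by_cases hB : B.card ≤ m
  · have h1 : I.filter (fun f => B ⊆ f)
        = I.filter (fun f => B ⊆ f ∧ f.card = B.card + (m - B.card)) := by
      apply filter_congr
      intro f hf
      simp only [eq_iff_iff, hIc f hf]
      constructor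
      · intro h; exact ⟨h, by omega⟩
      · intro h; exact h.1
    rw [h1, show ((m : ℤ) - B.card) = ((m - B.card : ℕ) : ℤ) by omega, zpow_natCast]
    exact hI B (m - B.card)
  · have h0 : I.filter (fun f => B ⊆ f) = ∅ := by
      rw [filter_eq_empty_iff]
      intro f hf hBf
      have := card_le_card hBf
      rw [hIc f hf] at this
      omega
    rw [h0]
    simp only [card_empty, Nat.cast_zero]
    positivity

lemma ext_bound {V : Type} [DecidableEq V] (H I : Finset (Finset V)) (ρ : ℝ)
    (d r : ℕ) (hrd : r ≤ d)
    (hIc : ∀ f ∈ I, f.card = d - r)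
    (h1 : ∀ f ∈ I, ∀ A : Finset V, A.Nonempty → Disjoint A f →
      ((H.filter (fun e' => f ∪ A ⊆ e')).card : ℝ) ≤ ρ ^ ((r : ℤ) - (A.card : ℤ)))
    (X : Finset V) (f : Finset V) (hf : f ∈ I) (hfX : f ⊂ X) :
    ((H.filter (fun e => X ⊆ e)).card : ℝ) ≤ ρ ^ ((d : ℤ) - X.card) := by
  have hsub : f ⊆ X := hfX.subset
  have hne : (X \ f).Nonempty := sdiff_nonempty.mpr hfX.not_subset
  have h2 := h1 f hf (X \ f) hne sdiff_disjoint
  rw [Finset.union_sdiff_of_subset hsub] at h2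
  have hfc : f.card = d - r := hIc f hf
  have hXc : d - r ≤ X.card := hfc ▸ card_le_card hsub
  have hexp : ((r : ℤ) - ((X \ f).card : ℤ)) = (d : ℤ) - X.card := by
    rw [card_sdiff_of_subset hsub, hfc]
    omega
  rw [hexp] at h2
  exact h2

lemma sum_over_sub {V : Type} [DecidableEq V] (ρ : ℝ) (hρ : 0 < ρ)
    (I : Finset (Finset V)) (m : ℕ) (hIc : ∀ f ∈ I, f.card = m)
    (hI : branching V I ρ) (W : Finset (Finset V)) (hW : W ⊆ I)
    (A : Finset V) (ψ : Finset V → ℝ) (t : ℤ)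
    (hψ : ∀ f ∈ W, ψ f ≤ ρ ^ (t - (m : ℤ) + ((f ∩ A).card : ℤ))) :
    (∑ f ∈ W, ψ f) ≤ 2 ^ A.card * ρ ^ t := by
  calc (∑ f ∈ W, ψ f)
      ≤ ∑ f ∈ W, ρ ^ (t - (m : ℤ) + ((f ∩ A).card : ℤ)) := Finset.sum_le_sum hψ
    _ = ∑ B ∈ A.powerset, ∑ f ∈ W.filter (fun f => f ∩ A = B),
          ρ ^ (t - (m : ℤ) + ((f ∩ A).card : ℤ)) := by
        rw [Finset.sum_fiberwise_of_maps_to (fun f _ => mem_powerset.mpr inter_subset_right)]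
    _ ≤ ∑ B ∈ A.powerset, ρ ^ t := by
        apply Finset.sum_le_sum
        intro B hB
        have hcongr : ∑ f ∈ W.filter (fun f => f ∩ A = B),
            ρ ^ (t - (m : ℤ) + ((f ∩ A).card : ℤ))
            = (W.filter (fun f => f ∩ A = B)).card * ρ ^ (t - (m : ℤ) + (B.card : ℤ)) := by
          rw [Finset.sum_congr rfl (fun f hf => by rw [(mem_filter.mp hf).2])]
          rw [Finset.sum_const, nsmul_eq_mul]
        rw [hcongr]
        have hsub : W.filter (fun f => f ∩ A = B) ⊆ I.filter (fun f => B ⊆ f) := by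
          intro f hf
          rw [mem_filter] at hf ⊢
          exact ⟨hW hf.1, hf.2 ▸ inter_subset_left⟩
        have hcard : ((W.filter (fun f => f ∩ A = B)).card : ℝ)
            ≤ ρ ^ ((m : ℤ) - B.card) := by
          calc ((W.filter (fun f => f ∩ A = B)).card : ℝ)
              ≤ ((I.filter (fun f => B ⊆ f)).card : ℝ) := by
                exact_mod_cast card_le_card hsub
            _ ≤ ρ ^ ((m : ℤ) - B.card) := branch_bound I ρ hρ m hIc hI B
        calc ((W.filter (fun f => f ∩ A = B)).card : ℝ) * ρ ^ (t - (m : ℤ) + (B.card : ℤ))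
            ≤ ρ ^ ((m : ℤ) - B.card) * ρ ^ (t - (m : ℤ) + (B.card : ℤ)) := by
              apply mul_le_mul_of_nonneg_right hcard (le_of_lt (zpow_pos hρ _))
          _ = ρ ^ t := by
              rw [← zpow_add₀ hρ.ne']
              ring_nf
    _ = 2 ^ A.card * ρ ^ t := by
        rw [Finset.sum_const, card_powerset, nsmul_eq_mul]
        push_cast
        ring


/-- First completion step: the subhypergraph `K ⊆ H` of all hyperedges of `H`
extending at least two distinct hyperedges of `I` has branching factor
`2^{d+1}·c/p`. -/
theorem stmt15 :
    ∀ (d : ℕ), 0 < d → ∀ c : ℝ, 0 < c → ∀ p : ℝ, p ∈ Set.Ioo (0:ℝ) 1 →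
      ∀ r : ℕ, 1 ≤ r → r ≤ d →
        ∀ (V : Type) [Fintype V] [DecidableEq V]
          (H I : Finset (Finset V)),
          (∀ e ∈ H, e.card = d) →
          (∀ e ∈ I, e.card = d - r) →
          (∀ e ∈ I, ∀ A : Finset V, A.Nonempty → Disjoint A e →
            ((H.filter (fun e' => e ∪ A ⊆ e')).card : ℝ) ≤
              (c / p) ^ ((r : ℤ) - (A.card : ℤ))) →
          branching V I (c / p) →
          branching V
            (H.filter (fun e => 2 ≤ (I.filter (fun e' => e' ⊆ e)).card))
            ((2:ℝ)^(d+1) * (c / p)) := by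
  intro d hd c hc p hp r hr1 hrd V _ _ H I hHc hIc h1 hI
  set ρ : ℝ := c / p with hρdef
  have hρ : 0 < ρ := div_pos hc hp.1
  intro A s
  by_cases hs : s = 0
  · subst hs
    have hsub : ((H.filter (fun e => 2 ≤ (I.filter (fun e' => e' ⊆ e)).card)).filter
        (fun e => A ⊆ e ∧ e.card = A.card + 0)) ⊆ {A} := by
      intro e he
      simp only [mem_filter, mem_singleton] at he ⊢
      exact (eq_of_subset_of_card_le he.2.1 (by omega)).symm
    have hle := card_le_card hsub
    simp only [card_singleton] at hle
    calc (((H.filter (fun e => 2 ≤ (I.filter (fun e' => e' ⊆ e)).card)).filter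
        (fun e => A ⊆ e ∧ e.card = A.card + 0)).card : ℝ) ≤ 1 := by exact_mod_cast hle
      _ = ((2:ℝ)^(d+1) * ρ) ^ 0 := by rw [pow_zero]
  have hs1 : 1 ≤ s := Nat.one_le_iff_ne_zero.mpr hs
  by_cases hAd : A.card + s = d
  swap
  · have h0 : ((H.filter (fun e => 2 ≤ (I.filter (fun e' => e' ⊆ e)).card)).filter
        (fun e => A ⊆ e ∧ e.card = A.card + s)) = ∅ := by
      rw [filter_eq_empty_iff]
      intro e he
      rw [mem_filter] at he
      have hd' := hHc e he.1
      intro hcontra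
      omega
    rw [h0]
    simp only [card_empty, Nat.cast_zero]
    positivity
  by_cases hX : ∃ f ∈ I, f ⊂ A
  · obtain ⟨f₀, hf₀I, hf₀A⟩ := hX
    have hsubK : ((H.filter (fun e => 2 ≤ (I.filter (fun e' => e' ⊆ e)).card)).filter
        (fun e => A ⊆ e ∧ e.card = A.card + s)) ⊆ H.filter (fun e => A ⊆ e) := by
      intro e he
      rw [mem_filter] at he ⊢
      exact ⟨(mem_filter.mp he.1).1, he.2.1⟩
    have hb := ext_bound H I ρ d r hrd hIc h1 A f₀ hf₀I hf₀A
    calc (((H.filter (fun e => 2 ≤ (I.filter (fun e' => e' ⊆ e)).card)).filter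
        (fun e => A ⊆ e ∧ e.card = A.card + s)).card : ℝ)
        ≤ ((H.filter (fun e => A ⊆ e)).card : ℝ) := by exact_mod_cast card_le_card hsubK
      _ ≤ ρ ^ ((d : ℤ) - A.card) := hb
      _ = ρ ^ s := by rw [show ((d:ℤ) - A.card) = ((s:ℕ):ℤ) by omega, zpow_natCast]
      _ ≤ ((2:ℝ)^(d+1) * ρ) ^ s := by
          rw [mul_pow]
          refine le_mul_of_one_le_left (pow_nonneg hρ.le s) ?_
          exact one_le_pow₀ (one_le_pow₀ one_le_two)
  · push_neg at hX
    set S := I.filter (fun f => ¬ f ⊆ A ∧ ¬ A ⊆ f) with hS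
    set T := I.filter (fun f => A ⊂ f) with hT
    set g₁ : Finset V → Finset (Finset V) := fun f => H.filter (fun e => f ∪ A ⊆ e) with hg₁
    set g₂ : Finset V → Finset (Finset V) :=
      fun f => (I.erase f).biUnion (fun f' => H.filter (fun e => f ∪ f' ⊆ e)) with hg₂
    have hcov : ((H.filter (fun e => 2 ≤ (I.filter (fun e' => e' ⊆ e)).card)).filter
        (fun e => A ⊆ e ∧ e.card = A.card + s)) ⊆ (S.biUnion g₁) ∪ (T.biUnion g₂) := by
      intro e he
      simp only [mem_filter] at he
      obtain ⟨⟨heH, he2⟩, heA, hec⟩ := he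
      obtain ⟨f₁, hf₁, f₂, hf₂, hne⟩ := Finset.one_lt_card.mp
        (by omega : 1 < (I.filter (fun e' => e' ⊆ e)).card)
      rw [mem_filter] at hf₁ hf₂
      have key : ∃ f f', f ∈ I ∧ f ⊆ e ∧ ¬ f ⊆ A ∧ f' ∈ I ∧ f' ⊆ e ∧ f' ≠ f := by
        by_cases h : f₁ ⊆ A
        · have he1 : f₁ = A := by
            by_contra hne'
            exact hX f₁ hf₁.1 (Finset.ssubset_iff_subset_ne.mpr ⟨h, hne'⟩)
          have h2' : ¬ f₂ ⊆ A := by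
            intro h2
            have he2' : f₂ = A := by
              by_contra hne'
              exact hX f₂ hf₂.1 (Finset.ssubset_iff_subset_ne.mpr ⟨h2, hne'⟩)
            exact hne (he1.trans he2'.symm)
          exact ⟨f₂, f₁, hf₂.1, hf₂.2, h2', hf₁.1, hf₁.2, fun hh => hne hh⟩
        · exact ⟨f₁, f₂, hf₁.1, hf₁.2, h, hf₂.1, hf₂.2, fun hh => hne hh.symm⟩
      obtain ⟨f, f', hfI, hfe, hfA, hf'I, hf'e, hf'ne⟩ := key
      rw [mem_union]
      by_cases hAf : A ⊆ f
      · right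
        rw [mem_biUnion]
        refine ⟨f, ?_, ?_⟩
        · rw [hT, mem_filter]
          exact ⟨hfI, Finset.ssubset_iff_subset_ne.mpr ⟨hAf, fun h => hfA (h ▸ Finset.Subset.refl A)⟩⟩
        · rw [mem_biUnion]
          exact ⟨f', mem_erase.mpr ⟨hf'ne, hf'I⟩, mem_filter.mpr ⟨heH, union_subset hfe hf'e⟩⟩
      · left
        rw [mem_biUnion]
        refine ⟨f, ?_, mem_filter.mpr ⟨heH, union_subset hfe heA⟩⟩
        rw [hS, mem_filter]
        exact ⟨hfI, hfA, hAf⟩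
    have hb1 : ((S.biUnion g₁).card : ℝ) ≤ 2 ^ d * ρ ^ s := by
      calc ((S.biUnion g₁).card : ℝ) ≤ ∑ f ∈ S, ((g₁ f).card : ℝ) := by
            exact_mod_cast card_biUnion_le
        _ ≤ 2 ^ A.card * ρ ^ ((s:ℕ):ℤ) := by
            apply sum_over_sub ρ hρ I (d - r) hIc hI S (filter_subset _ _) A _ ((s:ℕ):ℤ)
            intro f hf
            rw [hS, mem_filter] at hf
            have hss : f ⊂ f ∪ A := Finset.ssubset_iff_subset_ne.mpr
              ⟨subset_union_left, fun h => hf.2.2 (Finset.union_eq_left.mp h.symm)⟩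
            have hb := ext_bound H I ρ d r hrd hIc h1 (f ∪ A) f hf.1 hss
            have hcu := Finset.card_union_add_card_inter f A
            have hfc := hIc f hf.1
            rw [show ((d:ℤ) - (f ∪ A).card)
                = ((s:ℕ):ℤ) - ((d - r : ℕ):ℤ) + ((f ∩ A).card:ℤ) by omega] at hb
            exact hb
        _ ≤ 2 ^ d * ρ ^ s := by
            rw [zpow_natCast]
            apply mul_le_mul_of_nonneg_right _ (pow_nonneg hρ.le s)
            exact pow_le_pow_right₀ one_le_two (by omega)
    have hb2 : ((T.biUnion g₂).card : ℝ) ≤ 2 ^ d * ρ ^ s := by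
      have hinner : ∀ f ∈ T, ((g₂ f).card : ℝ) ≤ 2 ^ (d - r) * ρ ^ ((r:ℕ):ℤ) := by
        intro f hfT
        rw [hT, mem_filter] at hfT
        have hfc := hIc f hfT.1
        calc ((g₂ f).card : ℝ)
            ≤ ∑ f' ∈ I.erase f, ((H.filter (fun e => f ∪ f' ⊆ e)).card : ℝ) := by
              exact_mod_cast card_biUnion_le
          _ ≤ 2 ^ f.card * ρ ^ ((r:ℕ):ℤ) := by
              apply sum_over_sub ρ hρ I (d - r) hIc hI (I.erase f) (erase_subset _ _) f _ ((r:ℕ):ℤ)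
              intro f' hf'
              rw [mem_erase] at hf'
              have hf'c := hIc f' hf'.2
              have hss : f ⊂ f ∪ f' := by
                refine Finset.ssubset_iff_subset_ne.mpr ⟨subset_union_left, fun h => ?_⟩
                have hsub' : f' ⊆ f := Finset.union_eq_left.mp h.symm
                exact hf'.1 (Finset.eq_of_subset_of_card_le hsub' (by omega))
              have hb := ext_bound H I ρ d r hrd hIc h1 (f ∪ f') f hfT.1 hss
              have hcu := Finset.card_union_add_card_inter f f'
              have hic : (f ∩ f').card = (f' ∩ f).card := by rw [inter_comm]
              rw [show ((d:ℤ) - (f ∪ f').card)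
                  = ((r:ℕ):ℤ) - ((d - r : ℕ):ℤ) + ((f' ∩ f).card:ℤ) by omega] at hb
              exact hb
          _ = 2 ^ (d - r) * ρ ^ ((r:ℕ):ℤ) := by rw [hfc]
      have hTcard : ((T.card : ℝ)) ≤ ρ ^ (((d - r : ℕ):ℤ) - A.card) := by
        calc ((T.card : ℝ)) ≤ ((I.filter (fun f => A ⊆ f)).card : ℝ) := by
              apply Nat.cast_le.mpr
              apply card_le_card
              intro f hf
              rw [hT, mem_filter] at hf
              rw [mem_filter]
              exact ⟨hf.1, hf.2.subset⟩
          _ ≤ ρ ^ (((d - r : ℕ):ℤ) - A.card) := branch_bound I ρ hρ (d - r) hIc hI A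
      calc ((T.biUnion g₂).card : ℝ) ≤ ∑ f ∈ T, ((g₂ f).card : ℝ) := by
            exact_mod_cast card_biUnion_le
        _ ≤ ∑ _f ∈ T, (2 ^ (d - r) * ρ ^ ((r:ℕ):ℤ)) := Finset.sum_le_sum hinner
        _ = T.card * (2 ^ (d - r) * ρ ^ ((r:ℕ):ℤ)) := by rw [Finset.sum_const, nsmul_eq_mul]
        _ ≤ ρ ^ (((d - r : ℕ):ℤ) - A.card) * (2 ^ (d - r) * ρ ^ ((r:ℕ):ℤ)) := by
            apply mul_le_mul_of_nonneg_right hTcard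
            positivity
        _ = 2 ^ (d - r) * ρ ^ ((((d - r : ℕ):ℤ) - A.card) + ((r:ℕ):ℤ)) := by
            rw [zpow_add₀ hρ.ne']
            ring
        _ ≤ 2 ^ d * ρ ^ s := by
            rw [show ((((d - r : ℕ):ℤ) - A.card) + ((r:ℕ):ℤ)) = ((s:ℕ):ℤ) by omega,
              zpow_natCast]
            apply mul_le_mul_of_nonneg_right _ (pow_nonneg hρ.le s)
            exact pow_le_pow_right₀ one_le_two (by omega)
    calc (((H.filter (fun e => 2 ≤ (I.filter (fun e' => e' ⊆ e)).card)).filter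
        (fun e => A ⊆ e ∧ e.card = A.card + s)).card : ℝ)
        ≤ (((S.biUnion g₁) ∪ (T.biUnion g₂)).card : ℝ) := by exact_mod_cast card_le_card hcov
      _ ≤ ((S.biUnion g₁).card : ℝ) + ((T.biUnion g₂).card : ℝ) := by
          exact_mod_cast card_union_le _ _
      _ ≤ 2 ^ d * ρ ^ s + 2 ^ d * ρ ^ s := add_le_add hb1 hb2
      _ = 2 ^ (d + 1) * ρ ^ s := by ring
      _ ≤ ((2:ℝ)^(d+1) * ρ) ^ s := by
          rw [mul_pow]
          apply mul_le_mul_of_nonneg_right _ (pow_nonneg hρ.le s)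
          exact le_self_pow₀ (one_le_pow₀ one_le_two) hs
end

section
/- For every positive integer d and every c > 0 there exists p₀ = p₀(c,d) ∈ (0,1) and constants c₁ > 0, C₂ (depending only on d) such that the following holds for all p ∈ (0,p₀). Let 1 ≤ r ≤ d, let H be a d-uniform hypergraph and I a (d−r)-uniform hypergraph on the same finite vertex set such that: (1) every e ∈ I has at least (c/p)^r extensions in H; (2) for every e ∈ I and every nonempty set A disjoint from e, the set e ∪ A has at most (c/p)^{r−|A|} extensions in H; and (3) I has branching factor c/p. Then there exists a subhypergraph K ⊆ H such that K contains at least c₁·|I|·(c/p)^r hyperedges and K has branching factor C₂·c/p. -/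
/-!
For every `e ∈ I` keep exactly `⌈(c/p)^r⌉` of its extensions in `H`, and let `K` be the union
of these choices. A hyperedge of `K` has `d` elements, so it is chosen by at most `2^d` members of
`I`; this gives `|K| ≥ 2^{-d} |I| (c/p)^r`.

Since `K` is `d`-uniform, its branching factor only concerns sets `A` with `|A| < d`, where we
must count the hyperedges of `K` containing `A`. Group the `e ∈ I` by their trace `B = A ∩ e`.
The branching factor of the `(d-r)`-uniform `I` allows at most `(c/p)^{d-r-|B|}` of them, and
each contributes at most `2 (c/p)^{r-|A \ B|}` hyperedges containing `A`: by condition (2)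
applied to `A \ B` when `B ≠ A`, and by the size of the choice when `B = A`. Summing over the
`2^{|A|}` traces gives at most `2^{d+1} (c/p)^{d-|A|}`.
-/

open Finset

section

variable {V : Type} [DecidableEq V]

def extensions (H : Finset (Finset V)) (B : Finset V) : Finset (Finset V) :=
  H.filter (B ⊆ ·)

theorem branching_of_forall_card_eq {K : Finset (Finset V)} {d : ℕ} {ρ : ℝ} (hρ : 0 ≤ ρ)
    (hK : ∀ x ∈ K, #x = d)
    (h : ∀ (A : Finset V) (s : ℕ), 0 < s → #A + s = d →
      (#(extensions K A) : ℝ) ≤ ρ ^ s) :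
    branching V K ρ := by
  intro A s
  rcases Nat.eq_zero_or_pos s with rfl | hs
  · rw [pow_zero, Nat.cast_le_one, card_le_one]
    intro x hx y hy
    simp only [mem_filter, add_zero] at hx hy
    rw [← eq_of_subset_of_card_le hx.2.1 hx.2.2.le, ← eq_of_subset_of_card_le hy.2.1 hy.2.2.le]
  by_cases hAs : #A + s = d
  · refine le_trans ?_ (h A s hs hAs)
    exact_mod_cast card_le_card (monotone_filter_right _ fun _ _ (hx : A ⊆ _ ∧ _) => hx.1)
  · rw [filter_false_of_mem fun x hx (hAx : A ⊆ x ∧ #x = #A + s) => hAs (hAx.2 ▸ hK x hx),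
      card_empty, Nat.cast_zero]
    positivity

theorem branching.card_extensions_le {I : Finset (Finset V)} {k : ℕ} {ρ : ℝ}
    (hIρ : branching V I ρ) (hρ : 0 < ρ) (hI : ∀ e ∈ I, #e = k) (B : Finset V) :
    (#(extensions I B) : ℝ) ≤ ρ ^ ((k : ℤ) - #B) := by
  by_cases hB : #B ≤ k
  · have hsub : extensions I B ⊆ I.filter (fun e => B ⊆ e ∧ #e = #B + (k - #B)) :=
      fun e he => by
        simp only [extensions, mem_filter] at he ⊢
        exact ⟨he.1, he.2, by rw [hI e he.1]; omega⟩
    rw [← Nat.cast_sub hB, zpow_natCast]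
    exact le_trans (by exact_mod_cast card_le_card hsub) (hIρ B (k - #B))
  · have hempty : extensions I B = ∅ :=
      filter_false_of_mem fun e he hBe => hB (hI e he ▸ card_le_card hBe)
    rw [hempty, card_empty, Nat.cast_zero]
    positivity

theorem card_mul_le_card_biUnion_mul_two_pow {I : Finset (Finset V)}
    {F : Finset V → Finset (Finset V)} {n d : ℕ} (hF : ∀ e ∈ I, ∀ x ∈ F e, e ⊆ x)
    (hn : ∀ e ∈ I, n ≤ #(F e)) (hd : ∀ x ∈ I.biUnion F, #x ≤ d) :
    #I * n ≤ #(I.biUnion F) * 2 ^ d := by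
  refine card_mul_le_card_mul (fun e x => x ∈ F e) (fun e he => ?_) (fun x hx => ?_)
  · refine (hn e he).trans (card_le_card fun x hx => ?_)
    exact mem_filter.mpr ⟨mem_biUnion.mpr ⟨e, he, hx⟩, hx⟩
  · calc #(I.bipartiteBelow (fun e x => x ∈ F e) x) ≤ #x.powerset :=
          card_le_card fun e he => by
            rw [bipartiteBelow, mem_filter] at he
            exact mem_powerset.mpr (hF e he.1 x he.2)
      _ ≤ 2 ^ d := by rw [card_powerset]; exact Nat.pow_le_pow_right two_pos (hd x hx)

theorem branching_biUnion {H I : Finset (Finset V)} {F : Finset V → Finset (Finset V)}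
    {d k r : ℕ} {ρ : ℝ} (hρ : 0 < ρ) (hkr : k + r = d) (hH : ∀ x ∈ H, #x = d)
    (hI : ∀ e ∈ I, #e = k) (hIρ : branching V I ρ) (hF : ∀ e ∈ I, F e ⊆ extensions H e)
    (hFcard : ∀ e ∈ I, (#(F e) : ℝ) ≤ 2 * ρ ^ r)
    (hup : ∀ e ∈ I, ∀ A : Finset V, A.Nonempty → Disjoint A e →
      (#(extensions H (e ∪ A)) : ℝ) ≤ ρ ^ ((r : ℤ) - #A)) :
    branching V (I.biUnion F) (2 ^ (d + 1) * ρ) := by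
  have hFH : ∀ e ∈ I, ∀ x ∈ F e, x ∈ H ∧ e ⊆ x :=
    fun e he x hx => mem_filter.mp (hF e he hx)
  have hK : ∀ x ∈ I.biUnion F, #x = d := fun x hx => by
    obtain ⟨e, he, hx⟩ := mem_biUnion.mp hx
    exact hH x (hFH e he x hx).1
  refine branching_of_forall_card_eq (by positivity) hK fun A s hs hAs => ?_
  have hterm : ∀ e ∈ I, (#(extensions (F e) A) : ℝ) ≤ 2 * ρ ^ ((r : ℤ) - #(A \ e)) := by
    intro e he
    rcases (A \ e).eq_empty_or_nonempty with hAe | hAe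
    · rw [hAe, card_empty, Nat.cast_zero, sub_zero, zpow_natCast]
      exact le_trans (by exact_mod_cast card_le_card (filter_subset _ _)) (hFcard e he)
    · have hsub : extensions (F e) A ⊆ extensions H (e ∪ A \ e) := fun x hx => by
        obtain ⟨hxF, hAx⟩ := mem_filter.mp hx
        obtain ⟨hxH, hex⟩ := hFH e he x hxF
        exact mem_filter.mpr ⟨hxH, union_subset hex (sdiff_subset.trans hAx)⟩
      calc (#(extensions (F e) A) : ℝ) ≤ #(extensions H (e ∪ A \ e)) := by
            exact_mod_cast card_le_card hsub
        _ ≤ ρ ^ ((r : ℤ) - #(A \ e)) := hup e he _ hAe sdiff_disjoint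
        _ ≤ 2 * ρ ^ ((r : ℤ) - #(A \ e)) := by linarith [zpow_pos hρ ((r : ℤ) - #(A \ e))]
  have hfibre : ∀ B ∈ A.powerset,
      ∑ e ∈ I with A ∩ e = B, 2 * ρ ^ ((r : ℤ) - #(A \ e)) ≤ 2 * ρ ^ s := by
    intro B hB
    have hsd : ∀ e, A ∩ e = B → #(A \ e) = #A - #B := fun e he => by
      rw [← he, ← card_sdiff_add_card_inter A e]; omega
    rw [sum_congr rfl fun e he => by rw [hsd e (mem_filter.mp he).2], sum_const, nsmul_eq_mul]
    have hfib : #{e ∈ I | A ∩ e = B} ≤ #(extensions I B) :=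
      card_le_card (monotone_filter_right _ fun e _ he => he ▸ inter_subset_right)
    calc (#{e ∈ I | A ∩ e = B} : ℝ) * (2 * ρ ^ ((r : ℤ) - (#A - #B : ℕ)))
        ≤ ρ ^ ((k : ℤ) - #B) * (2 * ρ ^ ((r : ℤ) - (#A - #B : ℕ))) := by
          gcongr
          exact le_trans (by exact_mod_cast hfib) (hIρ.card_extensions_le hρ hI B)
      _ = 2 * ρ ^ s := by
          rw [mul_left_comm, ← zpow_add₀ hρ.ne', ← zpow_natCast]
          have hBA : #B ≤ #A := card_le_card (mem_powerset.mp hB)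
          congr 2
          push_cast [hBA]
          omega
  calc (#(extensions (I.biUnion F) A) : ℝ)
      ≤ ∑ e ∈ I, (#(extensions (F e) A) : ℝ) := by
        exact_mod_cast (card_le_card (filter_biUnion I F _).le).trans card_biUnion_le
    _ ≤ ∑ e ∈ I, 2 * ρ ^ ((r : ℤ) - #(A \ e)) := sum_le_sum hterm
    _ = ∑ B ∈ A.powerset, ∑ e ∈ I with A ∩ e = B, 2 * ρ ^ ((r : ℤ) - #(A \ e)) :=
        (sum_fiberwise_of_maps_to (fun e _ => mem_powerset.mpr inter_subset_left) _).symm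
    _ ≤ ∑ B ∈ A.powerset, 2 * ρ ^ s := sum_le_sum hfibre
    _ = 2 ^ (#A + 1) * ρ ^ s := by rw [sum_const, card_powerset, nsmul_eq_mul]; push_cast; ring
    _ ≤ 2 ^ (d + 1) * ρ ^ s := by gcongr <;> [norm_num; omega]
    _ ≤ (2 ^ (d + 1)) ^ s * ρ ^ s := by
        gcongr; exact le_self_pow₀ (one_le_pow₀ (by norm_num)) hs.ne'
    _ = (2 ^ (d + 1) * ρ) ^ s := (mul_pow _ _ _).symm

end

/-- Second completion step: under the critical-level conditions, `H` has a
subhypergraph `K` with at least `c₁·|I|·(c/p)^r` hyperedges and branching factor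
`C₂·c/p`, where `c₁ > 0` and `C₂` depend only on `d`, and `p₀` on `c` and `d`. -/
theorem stmt16 :
    ∀ (d : ℕ), 0 < d →
      ∃ c₁ : ℝ, 0 < c₁ ∧ ∃ C₂ : ℝ,
        ∀ c : ℝ, 0 < c →
          ∃ p₀ : ℝ, p₀ ∈ Set.Ioo (0:ℝ) 1 ∧
            ∀ p : ℝ, p ∈ Set.Ioo (0:ℝ) p₀ →
              ∀ r : ℕ, 1 ≤ r → r ≤ d →
                ∀ (V : Type) [Fintype V] [DecidableEq V]
                  (H I : Finset (Finset V)),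
                  (∀ e ∈ H, e.card = d) →
                  (∀ e ∈ I, e.card = d - r) →
                  (∀ e ∈ I, (c / p)^r ≤ ((H.filter (fun e' => e ⊆ e')).card : ℝ)) →
                  (∀ e ∈ I, ∀ A : Finset V, A.Nonempty → Disjoint A e →
                    ((H.filter (fun e' => e ∪ A ⊆ e')).card : ℝ) ≤
                      (c / p) ^ ((r : ℤ) - (A.card : ℤ))) →
                  branching V I (c / p) →
                  ∃ K ⊆ H,
                    c₁ * (I.card : ℝ) * (c / p)^r ≤ (K.card : ℝ) ∧
                    branching V K (C₂ * (c / p)) := by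
  intro d _
  refine ⟨(1 / 2) ^ d, by positivity, 2 ^ (d + 1),
    fun c hc => ⟨min c 1 / 2, ⟨by positivity, ?_⟩, ?_⟩⟩
  · linarith [min_le_right c 1]
  rintro p ⟨hp, hpc⟩ r - hrd V _ _ H I hH hI hext hup hIρ
  have hρ : 1 ≤ c / p := by rw [le_div_iff₀ hp]; linarith [min_le_left c 1, min_le_right c 1]
  set n := ⌈(c / p) ^ r⌉₊
  have hn : (n : ℝ) ≤ 2 * (c / p) ^ r := by
    linarith [Nat.ceil_lt_add_one (by positivity : 0 ≤ (c / p) ^ r), one_le_pow₀ (n := r) hρ]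
  choose! F hFH hFn using fun e he => exists_subset_card_eq (Nat.ceil_le.mpr (hext e he))
  have hKH : I.biUnion F ⊆ H :=
    biUnion_subset.mpr fun e he => (hFH e he).trans (filter_subset _ _)
  refine ⟨I.biUnion F, hKH, ?_,
    branching_biUnion (by positivity) (Nat.sub_add_cancel hrd) hH hI hIρ hFH
      (fun e he => by rw [hFn e he]; exact hn) hup⟩
  have hcount := card_mul_le_card_biUnion_mul_two_pow (n := n) (d := d)
    (fun e he x hx => (mem_filter.mp (hFH e he hx)).2) (fun e he => (hFn e he).ge)
    (fun x hx => (hH x (hKH hx)).le)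
  calc (1 / 2) ^ d * (#I : ℝ) * (c / p) ^ r ≤ (1 / 2) ^ d * (#I * n) := by
        rw [mul_assoc]; gcongr; exact Nat.le_ceil _
    _ ≤ (1 / 2) ^ d * (#(I.biUnion F) * 2 ^ d) :=
        mul_le_mul_of_nonneg_left (by exact_mod_cast hcount) (by positivity)
    _ = #(I.biUnion F) := by rw [mul_left_comm, ← mul_pow]; norm_num
end
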